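/- arXiv:2103.05356 — 6 statements merged into one kernel-verified Lean document; each statement's English description precedes it below -/
import Mathlib

section
/- Whitney jet compatibility estimate on a C^{1+γ} boundary: let D ⊂ ℝⁿ be a bounded domain with C^{1+γ} boundary and Φ ∈ C^{1+γ}(ℝⁿ) a defining function for D (Φ = 0 on ∂D, ∇Φ ≠ 0 on ∂D). Then sup{ |∇Φ(x)·(y−x)| / |y−x|^{1+γ} : x, y ∈ ∂D, x ≠ y } ≤ 2^{(1+γ)/2} · ‖∇Φ‖_{γ, ∂D}, where ‖∇Φ‖_{γ,∂D} = sup_{x≠y ∈ ∂D} |∇Φ(x) − ∇Φ(y)| / |x−y|^γ. -/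
open MeasureTheory Metric Set Filter Topology Bornology

/-!
Write `a(x, y) = ∇Φ(x)·(y - x)` and `r = |y - x|`. For `ε > 0` some constant `M` satisfies
`|a(x, y)| ≤ M r^(1+γ) + ε r` on `∂D`: the slack `ε r` absorbs small chords, because `Φ` is `C¹`
and vanishes on the compact set `∂D`. Now `|a(x, y) - ∇Φ(y)·(y - x)| ≤ H r^(1+γ)`, so either
`|a(x, y)| ≤ H r^(1+γ)`, or both derivatives along the chord have the same sign; then
`t ↦ Φ(x + t(y - x))` changes sign on `(0, 1)` and the chord meets `∂D` at some
`z = x + t(y - x)`. The bound `M` on the chords `[x, z]` and `[z, y]` gives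
`|a(x, y)| ≤ min(M t^γ, H + M (1 - t)^γ) r^(1+γ) + ε r`, and if `M > H` this minimum is at most
some `M' < M` independent of `t`. Hence the least such `M` is at most `H`, and `ε → 0` gives
`|a(x, y)| ≤ H r^(1+γ)`.
-/

theorem IsPreconnected.inter_frontier_nonempty {X : Type*} [TopologicalSpace X] {s t : Set X}
    (hs : IsPreconnected s) (hst : (s ∩ t).Nonempty) (hst' : (s \ t).Nonempty) :
    (s ∩ frontier t).Nonempty := by
  have := isPreconnected_iff_preconnectedSpace.mp hs
  obtain ⟨x, hxs, hxt⟩ := hst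
  obtain ⟨x', hx's, hx't⟩ := hst'
  obtain ⟨⟨z, hzs⟩, hz⟩ := (nonempty_frontier_iff (s := ((↑) : s → X) ⁻¹' t)).mpr
    ⟨⟨⟨x, hxs⟩, hxt⟩, fun h => hx't (show (⟨x', hx's⟩ : s) ∈ ((↑) : s → X) ⁻¹' t from h ▸ trivial)⟩
  exact ⟨z, hzs, continuous_subtype_val.frontier_preimage_subset t hz⟩

theorem HasDerivAt.eventually_pos_right_neg_left {g : ℝ → ℝ} {a x : ℝ} (hg : HasDerivAt g a x)
    (hgx : g x = 0) (ha : 0 < a) :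
    (∀ᶠ t in 𝓝[>] x, 0 < g t) ∧ ∀ᶠ t in 𝓝[<] x, g t < 0 := by
  have hsign := eventually_nhdsWithin_sign_eq_of_deriv_pos (hg.deriv ▸ ha) hgx
  constructor
  · filter_upwards [nhdsWithin_le_nhds hsign, self_mem_nhdsWithin] with t ht (hxt : x < t)
    rwa [sign_pos (sub_pos.2 hxt), sign_eq_one_iff] at ht
  · filter_upwards [nhdsWithin_le_nhds hsign, self_mem_nhdsWithin] with t ht (htx : t < x)
    rwa [sign_neg (sub_neg.2 htx), sign_eq_neg_one_iff] at ht

theorem exists_neg_pos_of_hasDerivAt {g : ℝ → ℝ} {a b : ℝ} (ha : HasDerivAt g a 0)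
    (hb : HasDerivAt g b 1) (hg₀ : g 0 = 0) (hg₁ : g 1 = 0) (hab : 0 < a * b) :
    ∃ u ∈ Ioo (0 : ℝ) 1, ∃ v ∈ Ioo (0 : ℝ) 1, g u < 0 ∧ 0 < g v := by
  wlog ha₀ : 0 < a generalizing g a b
  · have ha₀' : a < 0 := lt_of_le_of_ne (not_lt.1 ha₀) (left_ne_zero_of_mul hab.ne')
    obtain ⟨u, hu, v, hv, hgu, hgv⟩ := this ha.neg hb.neg (by simp [hg₀]) (by simp [hg₁])
      (by rwa [neg_mul_neg]) (neg_pos.2 ha₀')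
    exact ⟨v, hv, u, hu, neg_pos.1 hgv, neg_neg_iff_pos.1 hgu⟩
  have hb₀ : 0 < b := pos_of_mul_pos_right hab ha₀.le
  obtain ⟨v, hgv, hv⟩ := ((ha.eventually_pos_right_neg_left hg₀ ha₀).1.and
    (Ioo_mem_nhdsGT zero_lt_one)).exists
  obtain ⟨u, hgu, hu⟩ := ((hb.eventually_pos_right_neg_left hg₁ hb₀).2.and
    (Ioo_mem_nhdsLT zero_lt_one)).exists
  exact ⟨u, hu, v, hv, hgu, hgv⟩

theorem abs_le_of_abs_mul_le {a r s γ ε M : ℝ} (hs : 0 < s) (hr : 0 ≤ r)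
    (h : |s * a| ≤ M * (s * r) ^ (1 + γ) + ε * (s * r)) :
    |a| ≤ M * s ^ γ * r ^ (1 + γ) + ε * r := by
  rw [Real.mul_rpow hs.le hr, Real.rpow_add hs, Real.rpow_one, abs_mul, abs_of_pos hs] at h
  exact le_of_mul_le_mul_left (by linarith) hs

theorem mul_pos_of_abs_sub_lt_abs {a b : ℝ} (h : |a - b| < |a|) : 0 < a * b := by
  rcases abs_lt.mp h with ⟨h₁, h₂⟩
  rcases le_or_gt 0 a with ha | ha
  · rw [abs_of_nonneg ha] at h₁ h₂; nlinarith
  · rw [abs_of_neg ha] at h₁ h₂; nlinarith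

variable {E : Type*} [NormedAddCommGroup E] [NormedSpace ℝ E]

theorem exists_mem_frontier_of_fderiv_mul_pos {Φ : E → ℝ} (hΦ : Differentiable ℝ Φ) {x y : E}
    (hx : Φ x = 0) (hy : Φ y = 0) (hxy : 0 < fderiv ℝ Φ x (y - x) * fderiv ℝ Φ y (y - x)) :
    ∃ t ∈ Ioo (0 : ℝ) 1, x + t • (y - x) ∈ frontier {z | Φ z < 0} := by
  set ℓ : ℝ → E := fun t => x + t • (y - x)
  have hℓ : Continuous ℓ := by fun_prop
  have hderiv (t : ℝ) : HasDerivAt (Φ ∘ ℓ) (fderiv ℝ Φ (ℓ t) (y - x)) t :=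
    (hΦ _).hasFDerivAt.comp_hasDerivAt t (((hasDerivAt_id t).smul_const (y - x)).const_add x
      |>.congr_deriv (one_smul ℝ _))
  obtain ⟨u, hu, v, hv, hgu, hgv⟩ := exists_neg_pos_of_hasDerivAt
    (by simpa [ℓ] using hderiv 0) (by simpa [ℓ] using hderiv 1)
    (by simpa [ℓ] using hx) (by simpa [ℓ] using hy) hxy
  obtain ⟨t, htuv, ht⟩ := isPreconnected_uIcc.inter_frontier_nonempty
    (t := ℓ ⁻¹' {z | Φ z < 0}) ⟨u, left_mem_uIcc, hgu⟩ ⟨v, right_mem_uIcc, hgv.not_gt⟩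
  exact ⟨t, ordConnected_Ioo.uIcc_subset hu hv htuv, hℓ.frontier_preimage_subset _ ht⟩

theorem IsCompact.exists_forall_norm_sub_sub_fderiv_le {F : Type*} [NormedAddCommGroup F]
    [NormedSpace ℝ F] {f : E → F} (hf : ContDiff ℝ 1 f) {K : Set E} (hK : IsCompact K)
    {ε : ℝ} (hε : 0 < ε) :
    ∃ δ > 0, ∀ x ∈ K, ∀ y, ‖y - x‖ < δ → ‖f y - f x - fderiv ℝ f x (y - x)‖ ≤ ε * ‖y - x‖ := by
  obtain ⟨δ, hδ, hclose⟩ := mem_uniformity_dist.mp <|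
    hK.uniformContinuousAt_of_continuousAt (fderiv ℝ f)
      (fun x _ => (hf.continuous_fderiv one_ne_zero).continuousAt) (dist_mem_uniformity hε)
  refine ⟨δ, hδ, fun x hx y hxy => ?_⟩
  refine (convex_ball x δ).norm_image_sub_le_of_norm_fderiv_le'
    (fun z _ => (hf.differentiable one_ne_zero).differentiableAt) (fun z hz => ?_)
    (mem_ball_self hδ) (mem_ball_iff_norm.2 hxy)
  rw [← dist_eq_norm, dist_comm]
  exact (hclose (by rwa [dist_comm, ← mem_ball]) hx).le

theorem abs_apply_sub_apply_le {L : E → E →L[ℝ] ℝ} {γ H : ℝ} {x y : E}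
    (hH : ‖L x - L y‖ ≤ H * ‖x - y‖ ^ γ) (v : E) :
    |L x v - L y v| ≤ H * ‖x - y‖ ^ γ * ‖v‖ := by
  rw [← Real.norm_eq_abs, ← sub_apply]
  exact (ContinuousLinearMap.le_opNorm _ v).trans (by gcongr)

def ChordsCross (K : Set E) (L : E → E →L[ℝ] ℝ) : Prop :=
  ∀ x ∈ K, ∀ y ∈ K, 0 < L x (y - x) * L y (y - x) → ∃ t ∈ Ioo (0 : ℝ) 1, x + t • (y - x) ∈ K

def IsJetBound (K : Set E) (L : E → E →L[ℝ] ℝ) (γ ε M : ℝ) : Prop :=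
  ∀ x ∈ K, ∀ y ∈ K, |L x (y - x)| ≤ M * ‖y - x‖ ^ (1 + γ) + ε * ‖y - x‖

namespace IsJetBound

variable {K : Set E} {L : E → E →L[ℝ] ℝ} {γ ε H M : ℝ}

theorem mono {M' : ℝ} (h : IsJetBound K L γ ε M) (hM : M ≤ M') : IsJetBound K L γ ε M' :=
  fun x hx y hy => (h x hx y hy).trans (by gcongr)

theorem isClosed_setOf : IsClosed {M | IsJetBound K L γ ε M} := by
  simp only [IsJetBound, ofPred_forall]
  exact isClosed_biInter fun x _ => isClosed_biInter fun y _ =>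
    isClosed_le continuous_const (by fun_prop)

/-- Either the chord `[x, y]` is already good, or it crosses `K` at `z = x + t • (y - x)`; the two
bounds then come from `M` on the shorter chords `[x, z]` and `[z, y]`. -/
theorem dichotomy (hγ : 0 ≤ γ) (hH : ∀ x ∈ K, ∀ y ∈ K, ‖L x - L y‖ ≤ H * ‖x - y‖ ^ γ)
    (hcross : ChordsCross K L) (h : IsJetBound K L γ ε M) {x y : E} (hx : x ∈ K) (hy : y ∈ K) :
    |L x (y - x)| ≤ H * ‖y - x‖ ^ (1 + γ) ∨ ∃ t ∈ Ioo (0 : ℝ) 1,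
      |L x (y - x)| ≤ M * t ^ γ * ‖y - x‖ ^ (1 + γ) + ε * ‖y - x‖ ∧
      |L x (y - x)| ≤ (H * t ^ γ + M * (1 - t) ^ γ) * ‖y - x‖ ^ (1 + γ) + ε * ‖y - x‖ := by
  have hrpow : ‖y - x‖ ^ (1 + γ) = ‖y - x‖ ^ γ * ‖y - x‖ := by
    rw [Real.rpow_one_add' (norm_nonneg _) (by linarith), mul_comm]
  by_cases hgood : |L x (y - x)| ≤ H * ‖y - x‖ ^ (1 + γ)
  · exact .inl hgood
  right
  have hxy := abs_apply_sub_apply_le (hH x hx y hy) (y - x)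
  rw [norm_sub_rev x y, mul_assoc, ← hrpow] at hxy
  obtain ⟨t, ht, hz⟩ := hcross x hx y hy (mul_pos_of_abs_sub_lt_abs (by linarith))
  set z := x + t • (y - x)
  have hzx : z - x = t • (y - x) := add_sub_cancel_left _ _
  have hyz : y - z = (1 - t) • (y - x) := by simp only [z]; module
  have h1t : 0 < 1 - t := sub_pos.2 ht.2
  refine ⟨t, ht, ?_, ?_⟩
  · apply abs_le_of_abs_mul_le ht.1 (norm_nonneg _)
    simpa [hzx, norm_smul, abs_of_pos ht.1] using h x hx z hz
  · have hzy : |L z (y - x)| ≤ M * (1 - t) ^ γ * ‖y - x‖ ^ (1 + γ) + ε * ‖y - x‖ := by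
      apply abs_le_of_abs_mul_le h1t (norm_nonneg _)
      simpa [hyz, norm_smul, abs_of_pos h1t] using h z hz y hy
    have hxz : |L x (y - x) - L z (y - x)| ≤ H * t ^ γ * ‖y - x‖ ^ (1 + γ) := by
      have := abs_apply_sub_apply_le (hH x hx z hz) (y - x)
      rw [norm_sub_rev, hzx, norm_smul, Real.norm_of_nonneg ht.1.le,
        Real.mul_rpow ht.1.le (norm_nonneg _)] at this
      rw [hrpow]
      linarith
    linarith [abs_sub_abs_le_abs_sub (L x (y - x)) (L z (y - x))]

theorem bootstrap (hγ : 0 < γ) (hH₀ : 0 ≤ H) (hε : 0 ≤ ε) (hM₀ : 0 ≤ M)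
    (hH : ∀ x ∈ K, ∀ y ∈ K, ‖L x - L y‖ ≤ H * ‖x - y‖ ^ γ)
    (hcross : ChordsCross K L) (h : IsJetBound K L γ ε M) (s : ℝ) :
    IsJetBound K L γ ε (max H (max (M * (1 - s) ^ γ) (H + M * s ^ γ))) := by
  intro x hx y hy
  suffices ∃ c ≤ max H (max (M * (1 - s) ^ γ) (H + M * s ^ γ)),
      |L x (y - x)| ≤ c * ‖y - x‖ ^ (1 + γ) + ε * ‖y - x‖ by
    obtain ⟨c, hc, hxy⟩ := this
    exact hxy.trans (by gcongr)
  rcases h.dichotomy hγ.le hH hcross hx hy with hgood | ⟨t, ht, hxz, hzy⟩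
  · exact ⟨H, le_max_left _ _, le_add_of_le_of_nonneg hgood (by positivity)⟩
  rcases le_or_gt t (1 - s) with hts | hts
  · refine ⟨M * t ^ γ, le_max_of_le_right (le_max_of_le_left ?_), hxz⟩
    gcongr
    exact ht.1.le
  · refine ⟨H * t ^ γ + M * (1 - t) ^ γ, le_max_of_le_right (le_max_of_le_right ?_), hzy⟩
    gcongr
    · exact mul_le_of_le_one_right hH₀ (Real.rpow_le_one ht.1.le ht.2.le hγ.le)
    · linarith [ht.2]
    · linarith

theorem exists_lt (hγ : 0 < γ) (hH₀ : 0 ≤ H) (hε : 0 ≤ ε) (hHM : H < M)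
    (hH : ∀ x ∈ K, ∀ y ∈ K, ‖L x - L y‖ ≤ H * ‖x - y‖ ^ γ)
    (hcross : ChordsCross K L) (h : IsJetBound K L γ ε M) : ∃ M' < M, IsJetBound K L γ ε M' := by
  have hM₀ : 0 < M := hH₀.trans_lt hHM
  have hlim : Tendsto (fun s : ℝ => M * s ^ γ) (𝓝 0) (𝓝 0) := by
    have := ((Real.continuous_rpow_const hγ.le).tendsto 0).const_mul M
    rwa [Real.zero_rpow hγ.ne', mul_zero] at this
  obtain ⟨s, hsM, hs⟩ := (((hlim.eventually (gt_mem_nhds (sub_pos.2 hHM))).filter_mono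
    nhdsWithin_le_nhds).and (Ioo_mem_nhdsGT zero_lt_one)).exists
  refine ⟨_, max_lt hHM (max_lt ?_ (by linarith)), h.bootstrap hγ hH₀ hε hM₀.le hH hcross s⟩
  exact mul_lt_of_lt_one_right hM₀ (Real.rpow_lt_one (by linarith [hs.2]) (by linarith [hs.1]) hγ)

theorem of_exists (hγ : 0 < γ) (hH₀ : 0 ≤ H) (hε : 0 ≤ ε)
    (hH : ∀ x ∈ K, ∀ y ∈ K, ‖L x - L y‖ ≤ H * ‖x - y‖ ^ γ)
    (hcross : ChordsCross K L) (h : ∃ M, IsJetBound K L γ ε M) : IsJetBound K L γ ε H := by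
  by_contra hHbad
  have hgt : ∀ M ∈ {M | IsJetBound K L γ ε M}, H < M :=
    fun M hM => lt_of_not_ge fun hMH => hHbad (hM.mono hMH)
  have hbdd : BddBelow {M | IsJetBound K L γ ε M} := ⟨H, fun M hM => (hgt M hM).le⟩
  have hmem := isClosed_setOf.csInf_mem h hbdd
  obtain ⟨M', hM'lt, hM'⟩ := hmem.exists_lt hγ hH₀ hε (hgt _ hmem) hH hcross
  exact hM'lt.not_ge (csInf_le hbdd hM')

end IsJetBound

theorem IsCompact.exists_isJetBound_fderiv {Φ : E → ℝ} (hΦ : ContDiff ℝ 1 Φ)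
    {K : Set E} (hK : IsCompact K) (hΦK : ∀ x ∈ K, Φ x = 0) {γ ε : ℝ} (hγ : 0 ≤ γ)
    (hε : 0 < ε) :
    ∃ C, IsJetBound K (fderiv ℝ Φ) γ ε C := by
  obtain ⟨δ, hδ, hsmall⟩ := hK.exists_forall_norm_sub_sub_fderiv_le hΦ hε
  obtain ⟨B, hB⟩ := hK.exists_bound_of_continuousOn
    (hΦ.continuous_fderiv one_ne_zero).continuousOn
  refine ⟨B / δ ^ γ, fun x hx y hy => ?_⟩
  have hB₀ : 0 ≤ B := (norm_nonneg _).trans (hB x hx)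
  rcases lt_or_ge ‖y - x‖ δ with hr | hr
  · have := hsmall x hx y hr
    rw [hΦK x hx, hΦK y hy, sub_self, zero_sub, norm_neg, Real.norm_eq_abs] at this
    exact this.trans (le_add_of_nonneg_left (by positivity))
  · calc |fderiv ℝ Φ x (y - x)| ≤ B * ‖y - x‖ := by
          rw [← Real.norm_eq_abs]
          exact (ContinuousLinearMap.le_opNorm _ _).trans (by gcongr; exact hB x hx)
      _ = B / δ ^ γ * δ ^ γ * ‖y - x‖ := by field_simp
      _ ≤ B / δ ^ γ * ‖y - x‖ ^ γ * ‖y - x‖ := by gcongr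
      _ = B / δ ^ γ * ‖y - x‖ ^ (1 + γ) := by
          rw [Real.rpow_add' (hδ.le.trans hr) (by positivity), Real.rpow_one]; ring
      _ ≤ _ := le_add_of_nonneg_right (by positivity)

theorem abs_apply_sub_le_of_holder {K : Set E} {L : E → E →L[ℝ] ℝ} {γ H : ℝ} (hγ : 0 < γ)
    (hH : ∀ x ∈ K, ∀ y ∈ K, ‖L x - L y‖ ≤ H * ‖x - y‖ ^ γ)
    (hcross : ChordsCross K L) (hbdd : ∀ ε > 0, ∃ M, IsJetBound K L γ ε M) :
    ∀ x ∈ K, ∀ y ∈ K, |L x (y - x)| ≤ H * ‖y - x‖ ^ (1 + γ) := by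
  intro x hx y hy
  rcases eq_or_ne x y with rfl | hxy
  · simp [Real.zero_rpow (by linarith : 1 + γ ≠ 0)]
  have hH₀ : 0 ≤ H := (mul_nonneg_iff_of_pos_right
    (Real.rpow_pos_of_pos (norm_pos_iff.2 (sub_ne_zero.2 hxy)) γ)).mp
    ((norm_nonneg _).trans (hH x hx y hy))
  refine le_of_forall_pos_le_add fun δ hδ => ?_
  have hε : 0 < δ / (‖y - x‖ + 1) := by positivity
  have := IsJetBound.of_exists hγ hH₀ hε.le hH hcross (hbdd _ hε) x hx y hy
  have hεr : δ / (‖y - x‖ + 1) * ‖y - x‖ ≤ δ := by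
    rw [div_mul_eq_mul_div, div_le_iff₀ (by positivity)]
    nlinarith [norm_nonneg (y - x)]
  linarith

theorem stmt_10_general (n : ℕ) (γ : ℝ) (hγ : 0 < γ)
    (D : Set (EuclideanSpace ℝ (Fin n))) (Φ : EuclideanSpace ℝ (Fin n) → ℝ)
    (hbd : IsBounded D) (hΦ : ContDiff ℝ 1 Φ)
    (hDdef : D = {x | Φ x < 0})
    (hfr : ∀ x ∈ frontier D, Φ x = 0)
    (H : ℝ)
    (hH : ∀ x ∈ frontier D, ∀ y ∈ frontier D,
      ‖gradient Φ x - gradient Φ y‖ ≤ H * ‖x - y‖ ^ γ) :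
    ∀ x ∈ frontier D, ∀ y ∈ frontier D,
      |(inner ℝ (gradient Φ x) (y - x) : ℝ)|
        ≤ 2 ^ ((1 + γ) / 2) * H * ‖y - x‖ ^ (1 + γ) := by
  have hK : IsCompact (frontier D) :=
    hbd.isCompact_closure.of_isClosed_subset isClosed_frontier frontier_subset_closure
  have hL : ∀ x ∈ frontier D, ∀ y ∈ frontier D,
      ‖fderiv ℝ Φ x - fderiv ℝ Φ y‖ ≤ H * ‖x - y‖ ^ γ := fun x hx y hy => by
    simpa only [gradient, ← map_sub, LinearIsometryEquiv.norm_map] using hH x hx y hy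
  have hcross : ChordsCross (frontier D) (fderiv ℝ Φ) := fun x hx y hy hxy => by
    subst hDdef
    exact exists_mem_frontier_of_fderiv_mul_pos (hΦ.differentiable one_ne_zero)
      (hfr x hx) (hfr y hy) hxy
  intro x hx y hy
  have key := abs_apply_sub_le_of_holder hγ hL hcross
    (fun ε hε => hK.exists_isJetBound_fderiv hΦ hfr hγ.le hε) x hx y hy
  rw [inner_gradient_left, mul_assoc]
  exact key.trans (le_mul_of_one_le_left ((abs_nonneg _).trans key)
    (Real.one_le_rpow (by norm_num) (by positivity)))

/-- Whitney jet compatibility on a `C^{1+γ}` boundary: for a `C^{1+γ}` defining function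
`Φ` of a bounded domain `D` and any bound `H` for the Hölder seminorm of `∇Φ` on `∂D`,
`|∇Φ(x)·(y−x)| ≤ 2^{(1+γ)/2} H |y−x|^{1+γ}` for `x, y ∈ ∂D`. -/
theorem stmt_10 (n : ℕ) (γ : ℝ) (hγ : 0 < γ) (hγ1 : γ < 1)
    (D : Set (EuclideanSpace ℝ (Fin n))) (Φ : EuclideanSpace ℝ (Fin n) → ℝ)
    (hbd : IsBounded D) (hΦ : ContDiff ℝ 1 Φ)
    (hDdef : D = {x | Φ x < 0})
    (hfr : ∀ x ∈ frontier D, Φ x = 0)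
    (hgrad : ∀ x ∈ frontier D, gradient Φ x ≠ 0)
    (H : ℝ)
    (hH : ∀ x ∈ frontier D, ∀ y ∈ frontier D,
      ‖gradient Φ x - gradient Φ y‖ ≤ H * ‖x - y‖ ^ γ) :
    ∀ x ∈ frontier D, ∀ y ∈ frontier D,
      |(inner ℝ (gradient Φ x) (y - x) : ℝ)|
        ≤ 2 ^ ((1 + γ) / 2) * H * ‖y - x‖ ^ (1 + γ) :=
  stmt_10_general n γ hγ D Φ hbd hΦ hDdef hfr H hH
end

section
/- Implicit-function gradient bound: let Φ ∈ C^{1+γ} near 0 with Φ(0)=0, ∂_j Φ(0)=0 for 1 ≤ j ≤ n−1, ∂_n Φ(0) = |∇Φ(0)| > 0, and let δ satisfy δ^γ = |∇Φ(0)| / (2‖∇Φ‖_γ) where ‖∇Φ‖_γ is the Hölder seminorm of ∇Φ on the zero set of Φ near 0. If the zero set of Φ in B(0,δ) is the graph y_n = φ(y') of a C^{1+γ} function φ with φ(0)=0, then |∇φ(z')| ≤ (2^{1+γ/2} ‖∇Φ‖_γ / |∇Φ(0)|) |z'|^γ for all z' in the domain of φ with (z', φ(z')) ∈ B(0,δ).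 -/
open MeasureTheory Metric Set Filter Topology

/-- The point `(z', φ z')` of `ℝ^{n+1}` on the graph of `φ`. -/
noncomputable def graphPoint11 {n : ℕ} (φ : EuclideanSpace ℝ (Fin n) → ℝ)
    (z' : EuclideanSpace ℝ (Fin n)) : EuclideanSpace ℝ (Fin (n + 1)) :=
  (WithLp.equiv 2 (Fin (n + 1) → ℝ)).symm fun i =>
    Fin.lastCases (φ z') (fun j => z' j) i

/-- The first `n` coordinates of a point of `ℝ^{n+1}`. -/
noncomputable def dropLast11 {n : ℕ} (y : EuclideanSpace ℝ (Fin (n + 1))) :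
    EuclideanSpace ℝ (Fin n) :=
  (WithLp.equiv 2 (Fin n → ℝ)).symm fun j => y j.castSucc

/-!
Differentiating `Φ (z', φ z') = 0` gives `∂ₙΦ(z) ∇φ(z') = -∇'Φ(z)` at `z = (z', φ z')`, where
`∇'` collects the first `n` partial derivatives. On the zero set the Hölder bound gives
`‖∇Φ(z) - ∇Φ(0)‖ ≤ H ‖z‖^γ ≤ H δ^γ = |∇Φ(0)|/2`, so `∂ₙΦ(z) ≥ |∇Φ(0)|/2` and
`‖∇'Φ(z)‖ ≤ H ‖z‖^γ`, whence `‖∇φ(z')‖ ≤ 2 H ‖z‖^γ / |∇Φ(0)|`; in particular `‖∇φ‖ ≤ 1`.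

It remains to see `‖z‖ ≤ √2 ‖z'‖`, i.e. `|φ z'| ≤ ‖z'‖` when `√2 ‖z'‖ < δ` (otherwise
`‖z‖ < δ ≤ √2 ‖z'‖`). Along `s ↦ s z'` the mean value inequality gives `|φ (s z')| ≤ s ‖z'‖`
as long as the graph stays in the ball, and since the graph is the whole zero set, which is
closed, it cannot leave the ball before `s = 1`.
-/

open scoped RealInnerProductSpace

noncomputable def horizontalEmbedding (n : ℕ) :
    EuclideanSpace ℝ (Fin n) →L[ℝ] EuclideanSpace ℝ (Fin (n + 1)) :=
  LinearMap.toContinuousLinearMap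
    { toFun := fun x => WithLp.toLp 2 fun i => Fin.lastCases 0 (fun j => x j) i
      map_add' := fun x y => by
        ext i
        induction i using Fin.lastCases <;> simp
      map_smul' := fun c x => by
        ext i
        induction i using Fin.lastCases <;> simp }

@[simp]
lemma horizontalEmbedding_castSucc {n : ℕ} (x : EuclideanSpace ℝ (Fin n)) (j : Fin n) :
    horizontalEmbedding n x j.castSucc = x j := by
  simp [horizontalEmbedding]

@[simp]
lemma horizontalEmbedding_last {n : ℕ} (x : EuclideanSpace ℝ (Fin n)) :
    horizontalEmbedding n x (Fin.last n) = 0 := by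
  simp [horizontalEmbedding]

section Coordinates

variable {n : ℕ}

@[simp]
lemma dropLast11_apply (y : EuclideanSpace ℝ (Fin (n + 1))) (j : Fin n) :
    dropLast11 y j = y j.castSucc := rfl

lemma dropLast11_sub (y w : EuclideanSpace ℝ (Fin (n + 1))) :
    dropLast11 (y - w) = dropLast11 y - dropLast11 w := by
  ext j; simp

lemma continuous_dropLast11 : Continuous (dropLast11 : EuclideanSpace ℝ (Fin (n + 1)) → _) :=
  (PiLp.continuous_toLp 2 _).comp (continuous_pi fun j => PiLp.continuous_apply 2 _ j.castSucc)

lemma norm_dropLast11_le (y : EuclideanSpace ℝ (Fin (n + 1))) : ‖dropLast11 y‖ ≤ ‖y‖ := by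
  rw [EuclideanSpace.norm_eq, EuclideanSpace.norm_eq, Fin.sum_univ_castSucc]
  gcongr
  simp only [dropLast11_apply, le_add_iff_nonneg_right]
  positivity

lemma inner_horizontalEmbedding (y : EuclideanSpace ℝ (Fin (n + 1)))
    (x : EuclideanSpace ℝ (Fin n)) : ⟪y, horizontalEmbedding n x⟫ = ⟪dropLast11 y, x⟫ := by
  simp [PiLp.inner_apply, Fin.sum_univ_castSucc]

variable {φ : EuclideanSpace ℝ (Fin n) → ℝ} {z' : EuclideanSpace ℝ (Fin n)}

@[simp]
lemma graphPoint11_last : graphPoint11 φ z' (Fin.last n) = φ z' := by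
  simp [graphPoint11]

@[simp]
lemma dropLast11_graphPoint11 : dropLast11 (graphPoint11 φ z') = z' := by
  ext j; simp [graphPoint11]

lemma graphPoint11_dropLast11 {y : EuclideanSpace ℝ (Fin (n + 1))}
    (hy : y (Fin.last n) = φ (dropLast11 y)) : graphPoint11 φ (dropLast11 y) = y := by
  ext i
  induction i using Fin.lastCases <;> simp [graphPoint11, hy]

lemma graphPoint11_eq_add :
    graphPoint11 φ z' = horizontalEmbedding n z' + φ z' • EuclideanSpace.single (Fin.last n) 1 := by
  ext i
  induction i using Fin.lastCases <;> simp [graphPoint11, (Fin.castSucc_lt_last _).ne]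

lemma norm_graphPoint11_sq : ‖graphPoint11 φ z'‖ ^ 2 = ‖z'‖ ^ 2 + φ z' ^ 2 := by
  simp [EuclideanSpace.norm_sq_eq, Fin.sum_univ_castSucc, graphPoint11]

lemma norm_graphPoint11_le (h : |φ z'| ≤ ‖z'‖) :
    ‖graphPoint11 φ z'‖ ≤ √2 * ‖z'‖ := by
  refine le_of_sq_le_sq ?_ (by positivity)
  rw [norm_graphPoint11_sq, mul_pow, Real.sq_sqrt zero_le_two, ← sq_abs (φ z')]
  nlinarith [abs_nonneg (φ z')]

lemma graphPoint11_zero (hφ0 : φ 0 = 0) : graphPoint11 φ 0 = 0 := by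
  ext i
  induction i using Fin.lastCases <;> simp [graphPoint11, hφ0]

lemma hasFDerivAt_graphPoint11 {φ' : EuclideanSpace ℝ (Fin n) →L[ℝ] ℝ}
    (hφ : HasFDerivAt φ φ' z') :
    HasFDerivAt (graphPoint11 φ)
      (horizontalEmbedding n + φ'.smulRight (EuclideanSpace.single (Fin.last n) 1)) z' := by
  rw [show graphPoint11 φ = _ from funext fun _ => graphPoint11_eq_add]
  exact (horizontalEmbedding n).hasFDerivAt.add (hφ.smul_const _)

end Coordinates

section ImplicitDifferentiation

variable {n : ℕ} {Φ : EuclideanSpace ℝ (Fin (n + 1)) → ℝ} {φ : EuclideanSpace ℝ (Fin n) → ℝ}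
  {z' : EuclideanSpace ℝ (Fin n)}

lemma dropLast11_gradient_add_smul_gradient_eq_zero
    (hΦ : DifferentiableAt ℝ Φ (graphPoint11 φ z')) (hφ : DifferentiableAt ℝ φ z')
    (hzero : ∀ᶠ w' in 𝓝 z', Φ (graphPoint11 φ w') = 0) :
    dropLast11 (gradient Φ (graphPoint11 φ z')) +
      gradient Φ (graphPoint11 φ z') (Fin.last n) • gradient φ z' = 0 := by
  set z := graphPoint11 φ z'
  have hderiv := hΦ.hasFDerivAt.comp z' (hasFDerivAt_graphPoint11 hφ.hasFDerivAt)
  have hzero' : fderiv ℝ Φ z ∘L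
      (horizontalEmbedding n + (fderiv ℝ φ z').smulRight (EuclideanSpace.single (Fin.last n) 1))
      = 0 :=
    hderiv.unique ((hasFDerivAt_const 0 z').congr_of_eventuallyEq hzero)
  refine (inner_self_eq_zero (𝕜 := ℝ)).mp ?_
  set v := dropLast11 (gradient Φ z) + gradient Φ z (Fin.last n) • gradient φ z'
  have := congrArg (fun L => L v) hzero'
  simp only [ContinuousLinearMap.comp_apply, add_apply,
    ContinuousLinearMap.smulRight_apply, map_add, map_smul, ← inner_gradient_left,
    inner_horizontalEmbedding, EuclideanSpace.inner_single_right, zero_apply] at this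
  rw [inner_add_left, real_inner_smul_left, ← this]
  simp [mul_comm]

lemma norm_le_of_dropLast11_add_smul_eq_zero {a g : EuclideanSpace ℝ (Fin (n + 1))}
    {v : EuclideanSpace ℝ (Fin n)} (ha : ∀ j : Fin n, a j.castSucc = 0)
    (ha_last : a (Fin.last n) = ‖a‖) (ha_pos : 0 < ‖a‖) (hg : ‖g - a‖ ≤ ‖a‖ / 2)
    (hv : dropLast11 g + g (Fin.last n) • v = 0) : ‖v‖ ≤ 2 * ‖g - a‖ / ‖a‖ := by
  have hg_last : ‖a‖ / 2 ≤ g (Fin.last n) := by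
    have hcoord : |g (Fin.last n) - ‖a‖| ≤ ‖g - a‖ := by
      simpa [ha_last] using PiLp.norm_apply_le (g - a) (Fin.last n)
    linarith [neg_abs_le (g (Fin.last n) - ‖a‖)]
  have hdrop : ‖dropLast11 g‖ ≤ ‖g - a‖ := by
    have ha' : dropLast11 a = 0 := by ext j; simp [ha]
    simpa [dropLast11_sub, ha'] using norm_dropLast11_le (g - a)
  have hnorm : g (Fin.last n) * ‖v‖ = ‖dropLast11 g‖ := by
    rw [eq_neg_of_add_eq_zero_left hv, norm_neg, norm_smul, Real.norm_eq_abs,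
      abs_of_pos (by linarith)]
  rw [le_div_iff₀ ha_pos]
  nlinarith [norm_nonneg v]

end ImplicitDifferentiation

lemma Icc_subset_of_forall_Ico_subset {S : Set ℝ} {a b : ℝ} (hS : IsOpen S)
    (h : ∀ t ∈ Icc a b, Ico a t ⊆ S → t ∈ S) : Icc a b ⊆ S := by
  by_contra hsub
  obtain ⟨x, hx, hxS⟩ := not_subset.mp hsub
  set B := Icc a b \ S
  have hB : B.Nonempty := ⟨x, hx, hxS⟩
  have hBbdd : BddBelow B := ⟨a, fun y hy => hy.1.1⟩
  set m := sInf B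
  have hm : m ∈ Icc a b := ⟨le_csInf hB fun y hy => hy.1.1, (csInf_le hBbdd ⟨hx, hxS⟩).trans hx.2⟩
  have hmS : m ∈ S := h m hm fun s hs => by
    by_contra hsS
    exact (csInf_le hBbdd ⟨⟨hs.1, hs.2.le.trans hm.2⟩, hsS⟩).not_gt hs.2
  obtain ⟨ε, hε, hball⟩ := Metric.isOpen_iff.mp hS m hmS
  obtain ⟨y, hyB, hy⟩ := exists_lt_of_csInf_lt hB (lt_add_of_pos_right m hε)
  refine hyB.2 (hball ?_)
  rw [Real.ball_eq_Ioo]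
  exact ⟨by linarith [csInf_le hBbdd hyB], hy⟩

lemma abs_le_norm_of_norm_gradient_le_one {E : Type*} [NormedAddCommGroup E]
    [InnerProductSpace ℝ E] [CompleteSpace E] {f : E → ℝ} {x : E} (hf0 : f 0 = 0)
    (hdiff : ∀ y ∈ segment ℝ 0 x, DifferentiableAt ℝ f y)
    (hgrad : ∀ y ∈ segment ℝ 0 x, ‖gradient f y‖ ≤ 1) : |f x| ≤ ‖x‖ := by
  have hfderiv : ∀ y ∈ segment ℝ 0 x, ‖fderiv ℝ f y‖ ≤ 1 := fun y hy => by
    simpa [gradient] using hgrad y hy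
  simpa [hf0] using (convex_segment (0 : E) x).norm_image_sub_le_of_norm_fderiv_le hdiff hfderiv
    (left_mem_segment ℝ 0 x) (right_mem_segment ℝ 0 x)

section GraphContinuation

variable {n : ℕ} {Φ : EuclideanSpace ℝ (Fin (n + 1)) → ℝ} {φ : EuclideanSpace ℝ (Fin n) → ℝ}
  {U : Set (EuclideanSpace ℝ (Fin (n + 1)))}

lemma map_graphPoint11_eq_zero (hgraph : ∀ y ∈ U, (Φ y = 0 ↔ y (Fin.last n) = φ (dropLast11 y)))
    {z' : EuclideanSpace ℝ (Fin n)} (hz : graphPoint11 φ z' ∈ U) : Φ (graphPoint11 φ z') = 0 :=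
  (hgraph _ hz).mpr (by simp)

lemma isOpen_graphPoint11_preimage (hU : IsOpen U)
    (hφ : ∀ z', graphPoint11 φ z' ∈ U → ContinuousAt φ z') : IsOpen (graphPoint11 φ ⁻¹' U) := by
  refine isOpen_iff_mem_nhds.mpr fun z' hz => ?_
  have hcont : ContinuousAt (graphPoint11 φ) z' := by
    rw [show graphPoint11 φ = _ from funext fun _ => graphPoint11_eq_add]
    exact (horizontalEmbedding n).continuous.continuousAt.add ((hφ z' hz).smul continuousAt_const)
  exact hcont.preimage_mem_nhds (hU.mem_nhds hz)

/-- The zero set of `Φ` in `closedBall 0 ρ ⊆ ball 0 δ` is compact, so its projection is closed and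
contains `x`; by the graph property the point above `x` is `graphPoint11 φ x`. -/
lemma graphPoint11_mem_closedBall_of_tendsto {δ ρ : ℝ} (hρ : ρ < δ)
    (hΦ : ContinuousOn Φ (ball 0 δ))
    (hgraph : ∀ y ∈ ball 0 δ, (Φ y = 0 ↔ y (Fin.last n) = φ (dropLast11 y)))
    {ι : Type*} {l : Filter ι} [l.NeBot] {u : ι → EuclideanSpace ℝ (Fin n)} {x}
    (hu : Tendsto u l (𝓝 x)) (hmem : ∀ᶠ i in l, ‖graphPoint11 φ (u i)‖ ≤ ρ) :
    graphPoint11 φ x ∈ closedBall 0 ρ := by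
  have hsub : closedBall (0 : EuclideanSpace ℝ (Fin (n + 1))) ρ ⊆ ball 0 δ :=
    closedBall_subset_ball hρ
  set Z := closedBall 0 ρ ∩ Φ ⁻¹' {0}
  have hZ : IsCompact Z :=
    (isCompact_closedBall 0 ρ).of_isClosed_subset
      ((hΦ.mono hsub).preimage_isClosed_of_isClosed isClosed_closedBall isClosed_singleton)
      inter_subset_left
  have hx : x ∈ dropLast11 '' Z := by
    refine (hZ.image continuous_dropLast11).isClosed.mem_of_tendsto hu ?_
    filter_upwards [hmem] with i hi
    have hi' : graphPoint11 φ (u i) ∈ closedBall 0 ρ := mem_closedBall_zero_iff.mpr hi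
    exact ⟨graphPoint11 φ (u i), ⟨hi', map_graphPoint11_eq_zero hgraph (hsub hi')⟩,
      dropLast11_graphPoint11⟩
  obtain ⟨y, ⟨hyρ, hy0⟩, rfl⟩ := hx
  rwa [graphPoint11_dropLast11 ((hgraph y (hsub hyρ)).mp hy0)]

lemma abs_le_norm_of_sqrt_two_mul_norm_lt {δ : ℝ} (hδ : 0 < δ) (hΦ : ContinuousOn Φ (ball 0 δ))
    (hφ0 : φ 0 = 0) (hφdiff : ∀ z', graphPoint11 φ z' ∈ ball 0 δ → DifferentiableAt ℝ φ z')
    (hgrad : ∀ z', graphPoint11 φ z' ∈ ball 0 δ → ‖gradient φ z'‖ ≤ 1)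
    (hgraph : ∀ y ∈ ball 0 δ, (Φ y = 0 ↔ y (Fin.last n) = φ (dropLast11 y)))
    {z' : EuclideanSpace ℝ (Fin n)} (hz' : √2 * ‖z'‖ < δ) : |φ z'| ≤ ‖z'‖ := by
  set D := graphPoint11 φ ⁻¹' ball 0 δ
  have hD : IsOpen D :=
    isOpen_graphPoint11_preimage isOpen_ball fun w' hw' => (hφdiff w' hw').continuousAt
  have habs : ∀ w', segment ℝ 0 w' ⊆ D → |φ w'| ≤ ‖w'‖ := fun w' hw' =>
    abs_le_norm_of_norm_gradient_le_one hφ0 (fun y hy => hφdiff y (hw' hy))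
      (fun y hy => hgrad y (hw' hy))
  suffices hseg : segment ℝ 0 z' ⊆ D from habs z' hseg
  have hsegD : ∀ s : ℝ, 0 ≤ s → Icc 0 s ⊆ (· • z') ⁻¹' D → segment ℝ 0 (s • z') ⊆ D := by
    intro s hs0 hs w hw
    rw [segment_eq_image'] at hw
    obtain ⟨θ, ⟨hθ0, hθ1⟩, rfl⟩ := hw
    simpa [smul_smul] using hs ⟨mul_nonneg hθ0 hs0, mul_le_of_le_one_left hs0 hθ1⟩
  have hsmul : Icc (0 : ℝ) 1 ⊆ (· • z') ⁻¹' D := by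
    refine Icc_subset_of_forall_Ico_subset (hD.preimage (continuous_id.smul continuous_const))
      fun t ht hIco => ?_
    rcases ht.1.eq_or_lt with rfl | ht0
    · simp [D, graphPoint11_zero hφ0, hδ]
    refine closedBall_subset_ball hz' (graphPoint11_mem_closedBall_of_tendsto hz' hΦ hgraph
      ((tendsto_id.smul_const z').mono_left (nhdsWithin_le_nhds (s := Iio t))) ?_)
    filter_upwards [Ioo_mem_nhdsLT ht0] with s hs
    have hs1 : s ∈ Icc (0 : ℝ) 1 := ⟨hs.1.le, hs.2.le.trans ht.2⟩
    have hsD := hsegD s hs1.1 fun r hr => hIco ⟨hr.1, hr.2.trans_lt hs.2⟩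
    calc ‖graphPoint11 φ (s • z')‖ ≤ √2 * ‖s • z'‖ :=
          norm_graphPoint11_le (habs _ hsD)
      _ ≤ √2 * ‖z'‖ := by
          gcongr
          rw [norm_smul, Real.norm_of_nonneg hs1.1]
          exact mul_le_of_le_one_left (norm_nonneg _) hs1.2
  simpa using hsegD 1 zero_le_one hsmul

end GraphContinuation

section GradientBound

variable {n : ℕ} {Φ : EuclideanSpace ℝ (Fin (n + 1)) → ℝ} {φ : EuclideanSpace ℝ (Fin n) → ℝ}
  {δ : ℝ} {z' : EuclideanSpace ℝ (Fin n)}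

lemma norm_gradient_le_of_mem_graph (hΦ : DifferentiableOn ℝ Φ (ball 0 δ))
    (hgrad0 : ∀ j : Fin n, gradient Φ 0 j.castSucc = 0)
    (hgradn : gradient Φ 0 (Fin.last n) = ‖gradient Φ 0‖) (hpos : 0 < ‖gradient Φ 0‖)
    (hφdiff : ∀ z', graphPoint11 φ z' ∈ ball 0 δ → DifferentiableAt ℝ φ z')
    (hgraph : ∀ y ∈ ball 0 δ, (Φ y = 0 ↔ y (Fin.last n) = φ (dropLast11 y)))
    (hz : graphPoint11 φ z' ∈ ball 0 δ)
    (hclose : ‖gradient Φ (graphPoint11 φ z') - gradient Φ 0‖ ≤ ‖gradient Φ 0‖ / 2) :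
    ‖gradient φ z'‖ ≤ 2 * ‖gradient Φ (graphPoint11 φ z') - gradient Φ 0‖ / ‖gradient Φ 0‖ := by
  have hzero : ∀ᶠ w' in 𝓝 z', Φ (graphPoint11 φ w') = 0 := by
    have hD := isOpen_graphPoint11_preimage isOpen_ball fun w' hw' => (hφdiff w' hw').continuousAt
    filter_upwards [hD.mem_nhds hz] with w' hw'
    exact map_graphPoint11_eq_zero hgraph hw'
  exact norm_le_of_dropLast11_add_smul_eq_zero hgrad0 hgradn hpos hclose
    (dropLast11_gradient_add_smul_gradient_eq_zero
      (hΦ.differentiableAt (isOpen_ball.mem_nhds hz)) (hφdiff z' hz) hzero)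

lemma norm_gradient_le_mul_rpow {γ H : ℝ} (hγ : 0 ≤ γ) (hH : 0 < H)
    (hΦ : DifferentiableOn ℝ Φ (ball 0 δ))
    (hgrad0 : ∀ j : Fin n, gradient Φ 0 j.castSucc = 0)
    (hgradn : gradient Φ 0 (Fin.last n) = ‖gradient Φ 0‖) (hpos : 0 < ‖gradient Φ 0‖)
    (hδ : δ ^ γ = ‖gradient Φ 0‖ / (2 * H))
    (hHol : ∀ z ∈ ball 0 δ, Φ z = 0 → ‖gradient Φ z - gradient Φ 0‖ ≤ H * ‖z‖ ^ γ)
    (hφdiff : ∀ z', graphPoint11 φ z' ∈ ball 0 δ → DifferentiableAt ℝ φ z')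
    (hgraph : ∀ y ∈ ball 0 δ, (Φ y = 0 ↔ y (Fin.last n) = φ (dropLast11 y)))
    (hz : graphPoint11 φ z' ∈ ball 0 δ) :
    ‖gradient φ z'‖ ≤ 2 * H / ‖gradient Φ 0‖ * ‖graphPoint11 φ z'‖ ^ γ := by
  set N := ‖gradient Φ 0‖
  have hHol_z := hHol _ hz (map_graphPoint11_eq_zero hgraph hz)
  have hclose : H * ‖graphPoint11 φ z'‖ ^ γ ≤ N / 2 := by
    calc H * ‖graphPoint11 φ z'‖ ^ γ ≤ H * δ ^ γ := by
          gcongr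
          exact (mem_ball_zero_iff.mp hz).le
      _ = N / 2 := by rw [hδ]; field_simp
  calc ‖gradient φ z'‖
      ≤ 2 * ‖gradient Φ (graphPoint11 φ z') - gradient Φ 0‖ / N :=
        norm_gradient_le_of_mem_graph hΦ hgrad0 hgradn hpos hφdiff hgraph hz (hHol_z.trans hclose)
    _ ≤ 2 * (H * ‖graphPoint11 φ z'‖ ^ γ) / N := by gcongr
    _ = 2 * H / N * ‖graphPoint11 φ z'‖ ^ γ := by ring

end GradientBound

theorem stmt_11_general (n : ℕ) (γ : ℝ) (hγ : 0 < γ)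
    (Φ : EuclideanSpace ℝ (Fin (n + 1)) → ℝ) (H δ : ℝ) (hH : 0 < H) (hδpos : 0 < δ)
    (hΦ0 : Φ 0 = 0)
    (hΦdiff : ContDiffOn ℝ 1 Φ (ball (0 : EuclideanSpace ℝ (Fin (n + 1))) δ))
    (hgrad0 : ∀ j : Fin n, gradient Φ 0 j.castSucc = 0)
    (hgradn : gradient Φ 0 (Fin.last n) = ‖gradient Φ 0‖)
    (hpos : 0 < ‖gradient Φ 0‖)
    (hδ : δ ^ γ = ‖gradient Φ 0‖ / (2 * H))
    (hHol : ∀ z ∈ ball (0 : EuclideanSpace ℝ (Fin (n + 1))) δ, Φ z = 0 →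
      ∀ w ∈ ball (0 : EuclideanSpace ℝ (Fin (n + 1))) δ, Φ w = 0 →
        ‖gradient Φ z - gradient Φ w‖ ≤ H * ‖z - w‖ ^ γ)
    (φ : EuclideanSpace ℝ (Fin n) → ℝ) (hφ0 : φ 0 = 0)
    (hφdiff : ∀ z' : EuclideanSpace ℝ (Fin n), graphPoint11 φ z' ∈
      ball (0 : EuclideanSpace ℝ (Fin (n + 1))) δ → DifferentiableAt ℝ φ z')
    (hgraph : ∀ y ∈ ball (0 : EuclideanSpace ℝ (Fin (n + 1))) δ,
      (Φ y = 0 ↔ y (Fin.last n) = φ (dropLast11 y))) :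
    ∀ z' : EuclideanSpace ℝ (Fin n),
      graphPoint11 φ z' ∈ ball (0 : EuclideanSpace ℝ (Fin (n + 1))) δ →
      ‖gradient φ z'‖ ≤ 2 ^ (1 + γ / 2) * H / ‖gradient Φ 0‖ * ‖z'‖ ^ γ := by
  intro z' hz
  set N := ‖gradient Φ 0‖
  have hΦd : DifferentiableOn ℝ Φ (ball 0 δ) := hΦdiff.differentiableOn one_ne_zero
  have hgrad : ∀ w', graphPoint11 φ w' ∈ ball 0 δ →
      ‖gradient φ w'‖ ≤ 2 * H / N * ‖graphPoint11 φ w'‖ ^ γ := fun w' hw' =>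
    norm_gradient_le_mul_rpow hγ.le hH hΦd hgrad0 hgradn hpos hδ
      (fun w hw hw0 => by simpa using hHol w hw hw0 0 (mem_ball_self hδpos) hΦ0) hφdiff hgraph hw'
  have hgrad_le_one : ∀ w', graphPoint11 φ w' ∈ ball 0 δ → ‖gradient φ w'‖ ≤ 1 := by
    intro w' hw'
    calc ‖gradient φ w'‖ ≤ 2 * H / N * δ ^ γ := by
          grw [hgrad w' hw', (mem_ball_zero_iff.mp hw').le]
      _ = 1 := by rw [hδ]; field_simp
  have hnorm : ‖graphPoint11 φ z'‖ ≤ √2 * ‖z'‖ := by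
    rcases lt_or_ge (√2 * ‖z'‖) δ with hlt | hge
    · exact norm_graphPoint11_le (abs_le_norm_of_sqrt_two_mul_norm_lt hδpos hΦd.continuousOn hφ0
        hφdiff hgrad_le_one hgraph hlt)
    · exact (mem_ball_zero_iff.mp hz).le.trans hge
  calc ‖gradient φ z'‖ ≤ 2 * H / N * (√2 * ‖z'‖) ^ γ := by grw [hgrad z' hz, hnorm]
    _ = 2 ^ (1 + γ / 2) * H / N * ‖z'‖ ^ γ := by
      rw [Real.mul_rpow (by positivity) (norm_nonneg _), Real.sqrt_eq_rpow,
        ← Real.rpow_mul zero_le_two, Real.rpow_add zero_lt_two, Real.rpow_one]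
      ring_nf

/-- Implicit-function gradient bound: if `Φ(0)=0`, `∇Φ(0)` points in the `e_n` direction,
`δ^γ = |∇Φ(0)|/(2H)` with `H` a Hölder-`γ` bound of `∇Φ` on the zero set in `B(0,δ)`, and
the zero set of `Φ` in `B(0,δ)` is the graph `y_n = φ(y')`, then
`|∇φ(z')| ≤ (2^{1+γ/2} H / |∇Φ(0)|) |z'|^γ` whenever `(z', φ z') ∈ B(0,δ)`. -/
theorem stmt_11 (n : ℕ) (γ : ℝ) (hγ : 0 < γ) (hγ1 : γ < 1)
    (Φ : EuclideanSpace ℝ (Fin (n + 1)) → ℝ) (H δ : ℝ) (hH : 0 < H) (hδpos : 0 < δ)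
    (hΦ0 : Φ 0 = 0)
    (hΦdiff : ContDiffOn ℝ 1 Φ (ball (0 : EuclideanSpace ℝ (Fin (n + 1))) δ))
    (hgrad0 : ∀ j : Fin n, gradient Φ 0 j.castSucc = 0)
    (hgradn : gradient Φ 0 (Fin.last n) = ‖gradient Φ 0‖)
    (hpos : 0 < ‖gradient Φ 0‖)
    (hδ : δ ^ γ = ‖gradient Φ 0‖ / (2 * H))
    (hHol : ∀ z ∈ ball (0 : EuclideanSpace ℝ (Fin (n + 1))) δ, Φ z = 0 →
      ∀ w ∈ ball (0 : EuclideanSpace ℝ (Fin (n + 1))) δ, Φ w = 0 →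
        ‖gradient Φ z - gradient Φ w‖ ≤ H * ‖z - w‖ ^ γ)
    (φ : EuclideanSpace ℝ (Fin n) → ℝ) (hφ0 : φ 0 = 0)
    (hφdiff : ∀ z' : EuclideanSpace ℝ (Fin n), graphPoint11 φ z' ∈
      ball (0 : EuclideanSpace ℝ (Fin (n + 1))) δ → DifferentiableAt ℝ φ z')
    (hgraph : ∀ y ∈ ball (0 : EuclideanSpace ℝ (Fin (n + 1))) δ,
      (Φ y = 0 ↔ y (Fin.last n) = φ (dropLast11 y))) :
    ∀ z' : EuclideanSpace ℝ (Fin n),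
      graphPoint11 φ z' ∈ ball (0 : EuclideanSpace ℝ (Fin (n + 1))) δ →
      ‖gradient φ z'‖ ≤ 2 ^ (1 + γ / 2) * H / ‖gradient Φ 0‖ * ‖z'‖ ^ γ :=
  stmt_11_general n γ hγ Φ H δ hH hδpos hΦ0 hΦdiff hgrad0 hgradn hpos hδ hHol φ hφ0 hφdiff hgraph
end

section
/- Conserved quantity for the tilted-ellipse system: with (a, b, θ) solving a' = (2/(a₀+b₀)) ab cos(2θ), b' = −(2/(a₀+b₀)) ab cos(2θ), θ' = −(2/(a₀+b₀)) (ab/(a−b)) sin(2θ) on an interval where a ≠ b, the function (a(t) − b(t))·sin(2θ(t)) is constant: (a(t)−b(t)) sin(2θ(t)) = (a₀−b₀) sin(2θ₀) for all t. -/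
open Set

theorem Convex.eq_of_hasDerivAt_eq_zero {E : Type*} [NormedAddCommGroup E] [NormedSpace ℝ E]
    {f : ℝ → E} {s : Set ℝ} (hs : Convex ℝ s) (hf : ∀ x ∈ s, HasDerivAt f 0 x) {x y : ℝ}
    (hx : x ∈ s) (hy : y ∈ s) : f x = f y := by
  have h := hs.norm_image_sub_le_of_norm_hasDerivWithin_le (C := 0)
    (fun z hz => (hf z hz).hasDerivWithinAt) (fun _ _ => norm_zero.le) hy hx
  rw [zero_mul, norm_le_zero_iff, sub_eq_zero] at h
  exact h

/-- The two terms of the derivative are `±2 k a b sin 2θ cos 2θ`. -/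
theorem hasDerivAt_sub_mul_sin_two_mul_eq_zero {a b θ : ℝ → ℝ} {k t : ℝ} (hab : a t ≠ b t)
    (ha : HasDerivAt a (k * a t * b t * Real.cos (2 * θ t)) t)
    (hb : HasDerivAt b (-(k * a t * b t * Real.cos (2 * θ t))) t)
    (hθ : HasDerivAt θ (-(k * (a t * b t / (a t - b t)) * Real.sin (2 * θ t))) t) :
    HasDerivAt (fun s => (a s - b s) * Real.sin (2 * θ s)) 0 t := by
  refine ((ha.sub hb).mul (hθ.const_mul 2).sin).congr_deriv ?_
  have hsub : a t - b t ≠ 0 := sub_ne_zero.mpr hab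
  rw [Pi.sub_apply]
  field_simp
  ring

theorem stmt_15_general (a b θ : ℝ → ℝ) (a₀ b₀ θ₀ : ℝ)
    (I : Set ℝ) (hI : Convex ℝ I) (h0 : (0 : ℝ) ∈ I)
    (hia : a 0 = a₀) (hib : b 0 = b₀) (hiθ : θ 0 = θ₀)
    (hab : ∀ t ∈ I, a t ≠ b t)
    (hda : ∀ t ∈ I, HasDerivAt a (2 / (a₀ + b₀) * a t * b t * Real.cos (2 * θ t)) t)
    (hdb : ∀ t ∈ I, HasDerivAt b (-(2 / (a₀ + b₀) * a t * b t * Real.cos (2 * θ t))) t)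
    (hdθ : ∀ t ∈ I, HasDerivAt θ
      (-(2 / (a₀ + b₀) * (a t * b t / (a t - b t)) * Real.sin (2 * θ t))) t) :
    ∀ t ∈ I, (a t - b t) * Real.sin (2 * θ t) = (a₀ - b₀) * Real.sin (2 * θ₀) := by
  intro t ht
  subst hia hib hiθ
  exact hI.eq_of_hasDerivAt_eq_zero
    (fun s hs => hasDerivAt_sub_mul_sin_two_mul_eq_zero (hab s hs) (hda s hs) (hdb s hs) (hdθ s hs))
    ht h0

/-- Conserved quantity for the tilted-ellipse system: `(a(t) − b(t)) sin(2θ(t))` is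
constant on an interval where `a ≠ b`. -/
theorem stmt_15 (a b θ : ℝ → ℝ) (a₀ b₀ θ₀ : ℝ) (ha₀ : 0 < a₀) (hb₀ : 0 < b₀)
    (hne : a₀ ≠ b₀) (hθ₀ : θ₀ ∈ Ioo (0 : ℝ) (Real.pi / 2))
    (I : Set ℝ) (hI : Convex ℝ I) (h0 : (0 : ℝ) ∈ I)
    (hia : a 0 = a₀) (hib : b 0 = b₀) (hiθ : θ 0 = θ₀)
    (hab : ∀ t ∈ I, a t ≠ b t)
    (hda : ∀ t ∈ I, HasDerivAt a (2 / (a₀ + b₀) * a t * b t * Real.cos (2 * θ t)) t)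
    (hdb : ∀ t ∈ I, HasDerivAt b (-(2 / (a₀ + b₀) * a t * b t * Real.cos (2 * θ t))) t)
    (hdθ : ∀ t ∈ I, HasDerivAt θ
      (-(2 / (a₀ + b₀) * (a t * b t / (a t - b t)) * Real.sin (2 * θ t))) t) :
    ∀ t ∈ I, (a t - b t) * Real.sin (2 * θ t) = (a₀ - b₀) * Real.sin (2 * θ₀) :=
  stmt_15_general a b θ a₀ b₀ θ₀ I hI h0 hia hib hiθ hab hda hdb hdθ
end

section
/- Explicit solution for axis-aligned elliptical Cauchy patches: the functions a(t) = a₀(a₀+b₀)e^{2t}/(b₀ + a₀ e^{2t}) and b(t) = b₀(a₀+b₀)/(b₀ + a₀ e^{2t}) solve a' = 2ab/(a+b), b' = −2ab/(a+b) with a(0) = a₀, b(0) = b₀ (a₀, b₀ > 0), satisfy a(t)+b(t) = a₀+b₀ for all t ∈ ℝ, and have limits a(t) → a₀+b₀, b(t) → 0 as t → +∞, and a(t) → 0, b(t) → a₀+b₀ as t → −∞. -/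
open Set Filter Topology

/-!
Along `θ ≡ 0` the semi-axes keep a constant sum `s = a₀ + b₀`, so `b` alone obeys the logistic
equation `b' = -2 b (s - b) / s`, whose solution through `b₀` is `s b₀ / (b₀ + a₀ e^{2t})`;
then `a = s - b`, and the limits come from `e^{2t} → ∞` resp. `→ 0`.
-/

noncomputable def logisticDecay (s p q k t : ℝ) : ℝ :=
  s * p / (p + q * Real.exp (k * t))

namespace logisticDecay

variable {s p q k : ℝ}

theorem sub_eq {t : ℝ} (hD : p + q * Real.exp (k * t) ≠ 0) :
    s - logisticDecay s p q k t = s * q * Real.exp (k * t) / (p + q * Real.exp (k * t)) := by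
  rw [logisticDecay]
  field_simp
  ring

theorem hasDerivAt {t : ℝ} (hD : p + q * Real.exp (k * t) ≠ 0) :
    HasDerivAt (logisticDecay s p q k)
      (-(k * (s - logisticDecay s p q k t) * logisticDecay s p q k t / s)) t := by
  have hexp : HasDerivAt (fun t => Real.exp (k * t)) (Real.exp (k * t) * k) t :=
    ((hasDerivAt_id t).const_mul k).exp.congr_deriv (by simp)
  have hden : HasDerivAt (fun t => p + q * Real.exp (k * t)) (q * (Real.exp (k * t) * k)) t :=
    (hexp.const_mul q).const_add p
  refine ((hasDerivAt_const t (s * p)).div hden hD).congr_deriv ?_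
  rw [sub_eq hD]
  rcases eq_or_ne s 0 with rfl | hs
  · simp
  · simp only [logisticDecay]
    field_simp
    ring

theorem tendsto_atTop (hk : 0 < k) (hq : 0 < q) :
    Tendsto (logisticDecay s p q k) atTop (𝓝 0) := by
  have hexp : Tendsto (fun t => Real.exp (k * t)) atTop atTop :=
    Real.tendsto_exp_atTop.comp (tendsto_id.const_mul_atTop hk)
  exact tendsto_const_nhds.div_atTop (tendsto_atTop_add_const_left _ p (hexp.const_mul_atTop hq))

theorem tendsto_atBot (hk : 0 < k) (hp : p ≠ 0) :
    Tendsto (logisticDecay s p q k) atBot (𝓝 s) := by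
  have hexp : Tendsto (fun t => Real.exp (k * t)) atBot (𝓝 0) :=
    Real.tendsto_exp_atBot.comp (tendsto_id.const_mul_atBot hk)
  have hden : Tendsto (fun t => p + q * Real.exp (k * t)) atBot (𝓝 p) := by
    simpa using (hexp.const_mul q).const_add p
  have h := (tendsto_const_nhds (x := s * p)).div hden hp
  rwa [mul_div_cancel_right₀ s hp] at h

end logisticDecay

/-- Explicit solution for axis-aligned elliptical Cauchy patches:
`a(t) = a₀(a₀+b₀)e^{2t}/(b₀ + a₀e^{2t})`, `b(t) = b₀(a₀+b₀)/(b₀ + a₀e^{2t})` solve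
`a' = 2ab/(a+b)`, `b' = −2ab/(a+b)` with `a(0)=a₀`, `b(0)=b₀`, conserve `a+b`, and
collapse as `t → ±∞`. -/
theorem stmt_16 (a₀ b₀ : ℝ) (ha₀ : 0 < a₀) (hb₀ : 0 < b₀) (a b : ℝ → ℝ)
    (ha : ∀ t, a t = a₀ * (a₀ + b₀) * Real.exp (2 * t) / (b₀ + a₀ * Real.exp (2 * t)))
    (hb : ∀ t, b t = b₀ * (a₀ + b₀) / (b₀ + a₀ * Real.exp (2 * t))) :
    (∀ t, HasDerivAt a (2 * a t * b t / (a t + b t)) t) ∧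
    (∀ t, HasDerivAt b (-(2 * a t * b t / (a t + b t))) t) ∧
    a 0 = a₀ ∧ b 0 = b₀ ∧
    (∀ t, a t + b t = a₀ + b₀) ∧
    Tendsto a atTop (𝓝 (a₀ + b₀)) ∧ Tendsto b atTop (𝓝 0) ∧
    Tendsto a atBot (𝓝 0) ∧ Tendsto b atBot (𝓝 (a₀ + b₀)) := by
  set s := a₀ + b₀
  have hD t : b₀ + a₀ * Real.exp (2 * t) ≠ 0 := by positivity
  have hb_eq : b = logisticDecay s b₀ a₀ 2 := funext fun t => by
    rw [hb, logisticDecay, mul_comm]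
  have ha_eq : a = fun t => s - b t := funext fun t => by
    rw [hb_eq, logisticDecay.sub_eq (hD t), ha]
    ring
  have hsum t : a t + b t = s := by rw [ha_eq]; ring
  have hb' t : HasDerivAt b (-(2 * a t * b t / (a t + b t))) t := by
    rw [hsum, ha_eq]
    simpa only [hb_eq] using logisticDecay.hasDerivAt (s := s) (hD t)
  have hb_top : Tendsto b atTop (𝓝 0) := hb_eq ▸ logisticDecay.tendsto_atTop two_pos ha₀
  have hb_bot : Tendsto b atBot (𝓝 s) := hb_eq ▸ logisticDecay.tendsto_atBot two_pos hb₀.ne'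
  refine ⟨fun t => ?_, hb', ?_, ?_, hsum, ?_, hb_top, ?_, hb_bot⟩
  · simpa [← ha_eq] using (hb' t).const_sub s
  · rw [ha]; field_simp; simp [s, add_comm]
  · rw [hb]; field_simp; simp [s, add_comm]
  · simpa [← ha_eq] using hb_top.const_sub s
  · simpa [← ha_eq] using hb_bot.const_sub s
end

section
/- Global existence for the tilted-ellipse system: for any initial data (a₀, b₀, θ₀) in Ω = {(a,b,θ) : a > 0, b > 0, a ≠ b, 0 < θ < π/2}, the solution of a' = (2/(a₀+b₀)) ab cos(2θ), b' = −(2/(a₀+b₀)) ab cos(2θ), θ' = −(2/(a₀+b₀))(ab/(a−b)) sin(2θ) stays in Ω and is defined for all t ∈ ℝ. In particular, on [−T, T] one has a₀e^{−2T} ≤ a(t) ≤ a₀e^{2T} and b₀e^{−2T} ≤ b(t) ≤ b₀e^{2T}, θ(t) is strictly monotone, and θ(t) never reaches 0 or π/2, nor does a(t) = b(t) occur. -/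
/-!
Along the flow `a + b = s` and `C = (a - b) sin 2θ` are conserved, so the state is determined by
`x = cot 2θ`, which satisfies the Riccati equation `x' = (B² - C² x²) / (s C)` with
`B² = s² - C²`. Its explicit solution `x(t) = (B / C) tanh (B t / s + c)` exists for all times and keeps
`C² (1 + x²) < s²`, which is exactly `a, b > 0`; moreover `a - b = C / sin 2θ ≠ 0` and `2θ = arccot x`
stays in `(0, π)`. The exponential bounds follow from `|a'| ≤ 2a` and `|b'| ≤ 2b`, which hold because
`ab / (a + b) ≤ min a b`.
-/

open Real Set Function

theorem Real.hasDerivAt_tanh (x : ℝ) : HasDerivAt tanh (1 - tanh x ^ 2) x := by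
  have h := (hasDerivAt_sinh x).div (hasDerivAt_cosh x) (cosh_pos x).ne'
  rw [show tanh = sinh / cosh from funext fun y => tanh_eq_sinh_div_cosh y]
  refine h.congr_deriv ?_
  rw [Pi.div_apply]
  field_simp

theorem abs_log_sub_log_le_of_abs_deriv_le {f f' : ℝ → ℝ} {k : ℝ} (hpos : ∀ t, 0 < f t)
    (hf : ∀ t, HasDerivAt f (f' t) t) (hbound : ∀ t, |f' t| ≤ k * f t) (s t : ℝ) :
    |log (f t) - log (f s)| ≤ k * |t - s| :=
  convex_univ.norm_image_sub_le_of_norm_hasDerivWithin_le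
    (fun t _ => ((hf t).log (hpos t).ne').hasDerivWithinAt)
    (fun t _ => by
      rw [Real.norm_eq_abs, abs_div, abs_of_pos (hpos t), div_le_iff₀ (hpos t)]
      exact hbound t)
    (mem_univ s) (mem_univ t)

theorem mul_exp_neg_le_and_le_mul_exp_of_abs_deriv_le {f f' : ℝ → ℝ} {k : ℝ}
    (hpos : ∀ t, 0 < f t) (hf : ∀ t, HasDerivAt f (f' t) t) (hbound : ∀ t, |f' t| ≤ k * f t)
    {T t : ℝ} (ht : t ∈ Icc (-T) T) :
    f 0 * exp (-k * T) ≤ f t ∧ f t ≤ f 0 * exp (k * T) := by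
  have hk : 0 ≤ k := nonneg_of_mul_nonneg_left ((abs_nonneg _).trans (hbound 0)) (hpos 0)
  have hlog : |log (f t) - log (f 0)| ≤ k * T := by
    refine (abs_log_sub_log_le_of_abs_deriv_le hpos hf hbound 0 t).trans ?_
    rw [sub_zero]
    exact mul_le_mul_of_nonneg_left (abs_le.mpr ht) hk
  rw [abs_le] at hlog
  rw [← exp_log (hpos 0), ← exp_log (hpos t), ← exp_add, ← exp_add, exp_le_exp, exp_le_exp]
  constructor <;> linarith

theorem abs_two_div_add_mul_mul_cos_le {a b : ℝ} (ha : 0 < a) (hb : 0 < b) (y : ℝ) :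
    |2 / (a + b) * a * b * cos y| ≤ 2 * a := by
  rw [abs_mul, abs_of_pos (by positivity : 0 < 2 / (a + b) * a * b)]
  calc 2 / (a + b) * a * b * |cos y| ≤ 2 / (a + b) * a * b * 1 := by
        gcongr; exact abs_cos_le_one y
    _ ≤ 2 * a := by
        rw [mul_one, div_mul_eq_mul_div, div_mul_eq_mul_div, div_le_iff₀ (by positivity)]
        nlinarith [mul_pos ha ha]

/-- The tilt `θ` with `cot 2θ = x`, i.e. `2θ = arccot x ∈ (0, π)`. -/
noncomputable def tiltAngle (x : ℝ) : ℝ := (π / 2 - arctan x) / 2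

theorem two_mul_tiltAngle (x : ℝ) : 2 * tiltAngle x = π / 2 - arctan x := by
  unfold tiltAngle; ring

theorem tiltAngle_mem_Ioo (x : ℝ) : tiltAngle x ∈ Ioo 0 (π / 2) := by
  have := arctan_lt_pi_div_two x
  have := neg_pi_div_two_lt_arctan x
  constructor <;> unfold tiltAngle <;> linarith

theorem cos_two_mul_tiltAngle (x : ℝ) : cos (2 * tiltAngle x) = x / √(1 + x ^ 2) := by
  rw [two_mul_tiltAngle, cos_pi_div_two_sub, sin_arctan]

theorem sin_two_mul_tiltAngle (x : ℝ) : sin (2 * tiltAngle x) = 1 / √(1 + x ^ 2) := by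
  rw [two_mul_tiltAngle, sin_pi_div_two_sub, cos_arctan]

theorem tiltAngle_cos_div_sin {y : ℝ} (hy : y ∈ Ioo 0 π) : tiltAngle (cos y / sin y) = y / 2 := by
  obtain ⟨hy₀, hyπ⟩ := hy
  have hcot : cos y / sin y = tan (π / 2 - y) := by
    rw [tan_eq_sin_div_cos, sin_pi_div_two_sub, cos_pi_div_two_sub]
  rw [tiltAngle, hcot, arctan_tan (by linarith) (by linarith)]
  ring

theorem tiltAngle_injective : Injective tiltAngle := fun x y h => by
  apply arctan_injective
  unfold tiltAngle at h
  linarith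

theorem HasDerivAt.tiltAngle {w : ℝ → ℝ} {w' t : ℝ} (hw : HasDerivAt w w' t) :
    HasDerivAt (fun t => tiltAngle (w t)) (-(w' / (1 + w t ^ 2)) / 2) t :=
  ((hw.arctan.const_sub (π / 2)).div_const 2).congr_deriv (by ring)

/-- The semi-axes `a, b` with `a + b = s` and `(a - b) sin 2θ = C`, where `cot 2θ = x`. -/
noncomputable def semiAxisA (s C x : ℝ) : ℝ := (s + C * √(1 + x ^ 2)) / 2

noncomputable def semiAxisB (s C x : ℝ) : ℝ := (s - C * √(1 + x ^ 2)) / 2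

section SemiAxes

variable {s C x : ℝ}

theorem semiAxisA_add_semiAxisB : semiAxisA s C x + semiAxisB s C x = s := by
  unfold semiAxisA semiAxisB; ring

theorem semiAxisA_sub_semiAxisB : semiAxisA s C x - semiAxisB s C x = C * √(1 + x ^ 2) := by
  unfold semiAxisA semiAxisB; ring

theorem semiAxisA_mul_semiAxisB :
    semiAxisA s C x * semiAxisB s C x = (s ^ 2 - C ^ 2 * (1 + x ^ 2)) / 4 := by
  unfold semiAxisA semiAxisB
  rw [show C ^ 2 * (1 + x ^ 2) = (C * √(1 + x ^ 2)) ^ 2 by rw [mul_pow, sq_sqrt (by positivity)]]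
  ring

theorem abs_mul_sqrt_one_add_sq_lt (hs : 0 < s) (h : C ^ 2 * (1 + x ^ 2) < s ^ 2) :
    |C * √(1 + x ^ 2)| < s := by
  refine abs_lt_of_sq_lt_sq ?_ hs.le
  rwa [mul_pow, sq_sqrt (by positivity)]

theorem semiAxisA_pos (hs : 0 < s) (h : C ^ 2 * (1 + x ^ 2) < s ^ 2) : 0 < semiAxisA s C x := by
  have := neg_lt_of_abs_lt (abs_mul_sqrt_one_add_sq_lt hs h)
  unfold semiAxisA; linarith

theorem semiAxisB_pos (hs : 0 < s) (h : C ^ 2 * (1 + x ^ 2) < s ^ 2) : 0 < semiAxisB s C x := by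
  have := lt_of_abs_lt (abs_mul_sqrt_one_add_sq_lt hs h)
  unfold semiAxisB; linarith

theorem semiAxisA_ne_semiAxisB (hC : C ≠ 0) : semiAxisA s C x ≠ semiAxisB s C x := by
  rw [← sub_ne_zero, semiAxisA_sub_semiAxisB]
  positivity

theorem abs_two_div_mul_semiAxisA_mul_semiAxisB_mul_cos_le (hs : 0 < s)
    (h : C ^ 2 * (1 + x ^ 2) < s ^ 2) (y : ℝ) :
    |2 / s * semiAxisA s C x * semiAxisB s C x * cos y| ≤ 2 * semiAxisA s C x ∧
      |2 / s * semiAxisA s C x * semiAxisB s C x * cos y| ≤ 2 * semiAxisB s C x := by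
  have hA := abs_two_div_add_mul_mul_cos_le (semiAxisA_pos hs h) (semiAxisB_pos hs h) y
  have hB := abs_two_div_add_mul_mul_cos_le (semiAxisB_pos hs h) (semiAxisA_pos hs h) y
  rw [semiAxisA_add_semiAxisB] at hA
  rw [add_comm, semiAxisA_add_semiAxisB, mul_right_comm _ (semiAxisB s C x)] at hB
  exact ⟨hA, hB⟩

end SemiAxes

theorem mul_sin_mul_sqrt_one_add_cot_sq {y : ℝ} (hy : 0 < sin y) (d : ℝ) :
    d * sin y * √(1 + (cos y / sin y) ^ 2) = d := by
  rw [show 1 + (cos y / sin y) ^ 2 = (1 / sin y) ^ 2 by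
      field_simp; linear_combination sin_sq_add_cos_sq y,
    sqrt_sq (by positivity)]
  field_simp

theorem semiAxisA_cot {a b y : ℝ} (hy : 0 < sin y) :
    semiAxisA (a + b) ((a - b) * sin y) (cos y / sin y) = a := by
  rw [semiAxisA, mul_sin_mul_sqrt_one_add_cot_sq hy]; ring

theorem semiAxisB_cot {a b y : ℝ} (hy : 0 < sin y) :
    semiAxisB (a + b) ((a - b) * sin y) (cos y / sin y) = b := by
  rw [semiAxisB, mul_sin_mul_sqrt_one_add_cot_sq hy]; ring

theorem HasDerivAt.const_mul_sqrt_one_add_sq {w : ℝ → ℝ} {w' t : ℝ} (hw : HasDerivAt w w' t)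
    (C : ℝ) : HasDerivAt (fun t => C * √(1 + w t ^ 2)) (C * w t * w' / √(1 + w t ^ 2)) t := by
  refine (((hw.fun_pow 2).const_add 1).sqrt (by positivity)).const_mul C |>.congr_deriv ?_
  field_simp
  ring

section CotangentEquation

variable {s C t : ℝ} {w : ℝ → ℝ}

theorem hasDerivAt_semiAxisA (hs : s ≠ 0) (hC : C ≠ 0)
    (hw : HasDerivAt w ((s ^ 2 - C ^ 2 * (1 + w t ^ 2)) / (s * C)) t) :
    HasDerivAt (fun t => semiAxisA s C (w t))
      (2 / s * semiAxisA s C (w t) * semiAxisB s C (w t) * cos (2 * tiltAngle (w t))) t := by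
  refine ((hw.const_mul_sqrt_one_add_sq C).const_add s |>.div_const 2).congr_deriv ?_
  rw [mul_assoc _ (semiAxisA s C (w t)), semiAxisA_mul_semiAxisB, cos_two_mul_tiltAngle]
  field_simp
  ring

theorem hasDerivAt_semiAxisB (hs : s ≠ 0) (hC : C ≠ 0)
    (hw : HasDerivAt w ((s ^ 2 - C ^ 2 * (1 + w t ^ 2)) / (s * C)) t) :
    HasDerivAt (fun t => semiAxisB s C (w t))
      (-(2 / s * semiAxisA s C (w t) * semiAxisB s C (w t) * cos (2 * tiltAngle (w t)))) t := by
  refine ((hw.const_mul_sqrt_one_add_sq C).const_sub s |>.div_const 2).congr_deriv ?_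
  rw [mul_assoc _ (semiAxisA s C (w t)), semiAxisA_mul_semiAxisB, cos_two_mul_tiltAngle]
  field_simp
  ring

theorem hasDerivAt_tiltAngle_of_cot (hs : s ≠ 0) (hC : C ≠ 0)
    (hw : HasDerivAt w ((s ^ 2 - C ^ 2 * (1 + w t ^ 2)) / (s * C)) t) :
    HasDerivAt (fun t => tiltAngle (w t))
      (-(2 / s * (semiAxisA s C (w t) * semiAxisB s C (w t) /
        (semiAxisA s C (w t) - semiAxisB s C (w t))) * sin (2 * tiltAngle (w t)))) t := by
  have hr : √(1 + w t ^ 2) ^ 2 = 1 + w t ^ 2 := sq_sqrt (by positivity)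
  refine hw.tiltAngle.congr_deriv ?_
  rw [semiAxisA_mul_semiAxisB, semiAxisA_sub_semiAxisB, sin_two_mul_tiltAngle]
  field_simp
  rw [hr]
  ring

theorem semiAxes_exp_bounds (hs : 0 < s) (hC : C ≠ 0)
    (hw : ∀ t, HasDerivAt w ((s ^ 2 - C ^ 2 * (1 + w t ^ 2)) / (s * C)) t)
    (hw_bound : ∀ t, C ^ 2 * (1 + w t ^ 2) < s ^ 2) {T : ℝ} (ht : t ∈ Icc (-T) T) :
    semiAxisA s C (w 0) * exp (-2 * T) ≤ semiAxisA s C (w t) ∧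
      semiAxisA s C (w t) ≤ semiAxisA s C (w 0) * exp (2 * T) ∧
      semiAxisB s C (w 0) * exp (-2 * T) ≤ semiAxisB s C (w t) ∧
      semiAxisB s C (w t) ≤ semiAxisB s C (w 0) * exp (2 * T) := by
  have hA := mul_exp_neg_le_and_le_mul_exp_of_abs_deriv_le
    (fun t => semiAxisA_pos hs (hw_bound t)) (fun t => hasDerivAt_semiAxisA hs.ne' hC (hw t))
    (fun t => (abs_two_div_mul_semiAxisA_mul_semiAxisB_mul_cos_le hs (hw_bound t) _).1) ht
  have hB := mul_exp_neg_le_and_le_mul_exp_of_abs_deriv_le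
    (fun t => semiAxisB_pos hs (hw_bound t)) (fun t => hasDerivAt_semiAxisB hs.ne' hC (hw t))
    (fun t => (abs_neg (α := ℝ) _).trans_le
      (abs_two_div_mul_semiAxisA_mul_semiAxisB_mul_cos_le hs (hw_bound t) _).2) ht
  exact ⟨hA.1, hA.2, hB.1, hB.2⟩

end CotangentEquation

theorem exists_global_cot_solution {s C x₀ : ℝ} (hs : 0 < s) (hC : C ≠ 0)
    (hx₀ : C ^ 2 * (1 + x₀ ^ 2) < s ^ 2) :
    ∃ w : ℝ → ℝ, w 0 = x₀ ∧ Injective w ∧ (∀ t, C ^ 2 * (1 + w t ^ 2) < s ^ 2) ∧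
      ∀ t, HasDerivAt w ((s ^ 2 - C ^ 2 * (1 + w t ^ 2)) / (s * C)) t := by
  set B := √(s ^ 2 - C ^ 2)
  have hB2 : B ^ 2 = s ^ 2 - C ^ 2 := sq_sqrt (by nlinarith [sq_nonneg x₀, sq_nonneg C])
  have hB : 0 < B := sqrt_pos.2 (by nlinarith [sq_nonneg (C * x₀)])
  have hx₀B : C * x₀ / B ∈ Ioo (-1) 1 := by
    rw [mem_Ioo, ← abs_lt, abs_div, abs_of_pos hB, div_lt_one hB]
    exact abs_lt_of_sq_lt_sq (by nlinarith) hB.le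
  refine ⟨fun t => B / C * tanh (B / s * t + artanh (C * x₀ / B)), ?_, ?_, fun t => ?_, fun t => ?_⟩
  · simp only [mul_zero, zero_add, tanh_artanh hx₀B]
    field_simp
  · exact (mul_right_injective₀ (div_ne_zero hB.ne' hC)).comp <| tanh_injective.comp <|
      (add_left_injective _).comp (mul_right_injective₀ (div_ne_zero hB.ne' hs.ne'))
  · have hT := tanh_sq_lt_one (B / s * t + artanh (C * x₀ / B))
    beta_reduce
    generalize tanh (B / s * t + artanh (C * x₀ / B)) = T at hT ⊢
    field_simp
    nlinarith [mul_lt_mul_of_pos_left hT (pow_pos hB 2)]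
  · have hτ := ((hasDerivAt_id' t).const_mul (B / s)).add_const (artanh (C * x₀ / B))
    refine ((hasDerivAt_tanh _).comp t hτ).const_mul (B / C) |>.congr_deriv ?_
    beta_reduce
    generalize tanh (B / s * t + artanh (C * x₀ / B)) = T
    field_simp
    rw [hB2]
    ring

/-- Global existence for the tilted-ellipse system: for initial data in
`Ω = {a > 0, b > 0, a ≠ b, 0 < θ < π/2}` there is a global solution which stays in `Ω`,
satisfies `a₀e^{−2T} ≤ a(t) ≤ a₀e^{2T}` and `b₀e^{−2T} ≤ b(t) ≤ b₀e^{2T}` on `[−T, T]`,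
and whose angle `θ` is strictly monotone. -/
theorem stmt_17 (a₀ b₀ θ₀ : ℝ) (ha₀ : 0 < a₀) (hb₀ : 0 < b₀) (hne : a₀ ≠ b₀)
    (hθ₀ : θ₀ ∈ Ioo (0 : ℝ) (Real.pi / 2)) :
    ∃ a b θ : ℝ → ℝ,
      a 0 = a₀ ∧ b 0 = b₀ ∧ θ 0 = θ₀ ∧
      (∀ t, HasDerivAt a (2 / (a₀ + b₀) * a t * b t * Real.cos (2 * θ t)) t) ∧
      (∀ t, HasDerivAt b (-(2 / (a₀ + b₀) * a t * b t * Real.cos (2 * θ t))) t) ∧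
      (∀ t, HasDerivAt θ
        (-(2 / (a₀ + b₀) * (a t * b t / (a t - b t)) * Real.sin (2 * θ t))) t) ∧
      (∀ t, 0 < a t ∧ 0 < b t ∧ a t ≠ b t ∧ θ t ∈ Ioo (0 : ℝ) (Real.pi / 2)) ∧
      (∀ T : ℝ, 0 ≤ T → ∀ t ∈ Icc (-T) T,
        a₀ * Real.exp (-2 * T) ≤ a t ∧ a t ≤ a₀ * Real.exp (2 * T) ∧
        b₀ * Real.exp (-2 * T) ≤ b t ∧ b t ≤ b₀ * Real.exp (2 * T)) ∧
      (StrictMono θ ∨ StrictAnti θ) := by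
  obtain ⟨hθ₀, hθ₀'⟩ := hθ₀
  set s := a₀ + b₀
  set C := (a₀ - b₀) * sin (2 * θ₀)
  set x₀ := cos (2 * θ₀) / sin (2 * θ₀)
  have hs : 0 < s := add_pos ha₀ hb₀
  have hsin : 0 < sin (2 * θ₀) := sin_pos_of_pos_of_lt_pi (by linarith) (by linarith)
  have hC : C ≠ 0 := mul_ne_zero (sub_ne_zero.2 hne) hsin.ne'
  have ha₀' : semiAxisA s C x₀ = a₀ := semiAxisA_cot hsin
  have hb₀' : semiAxisB s C x₀ = b₀ := semiAxisB_cot hsin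
  have hx₀ : C ^ 2 * (1 + x₀ ^ 2) < s ^ 2 := by
    have := (semiAxisA_mul_semiAxisB (s := s) (C := C) (x := x₀)).symm
    rw [ha₀', hb₀'] at this
    nlinarith [mul_pos ha₀ hb₀]
  obtain ⟨w, hw₀, hw_inj, hw_bound, hw⟩ := exists_global_cot_solution hs hC hx₀
  have hθ : ∀ t, HasDerivAt (fun t => tiltAngle (w t)) _ t := fun t =>
    hasDerivAt_tiltAngle_of_cot hs.ne' hC (hw t)
  refine ⟨fun t => semiAxisA s C (w t), fun t => semiAxisB s C (w t), fun t => tiltAngle (w t),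
    by simp only [hw₀, ha₀'], by simp only [hw₀, hb₀'], ?_,
    fun t => hasDerivAt_semiAxisA hs.ne' hC (hw t), fun t => hasDerivAt_semiAxisB hs.ne' hC (hw t),
    hθ, fun t => ⟨semiAxisA_pos hs (hw_bound t), semiAxisB_pos hs (hw_bound t),
      semiAxisA_ne_semiAxisB hC, tiltAngle_mem_Ioo _⟩, fun T _ t ht => ?_, ?_⟩
  · show tiltAngle (w 0) = θ₀
    rw [hw₀, tiltAngle_cos_div_sin ⟨by linarith, by linarith⟩]
    ring
  · simpa only [hw₀, ha₀', hb₀'] using semiAxes_exp_bounds hs hC hw hw_bound ht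
  · exact Continuous.strictMono_of_inj
      (continuous_iff_continuousAt.2 fun t => (hθ t).continuousAt)
      (tiltAngle_injective.comp hw_inj)
end

section
/- Exponential collapse of the minor axis: suppose (a, b, θ) solves the tilted-ellipse system with a₀ > b₀ > 0 and 0 < θ₀ < π/4. Then θ(t) is decreasing for t ≥ 0, a(t) is increasing, b(t) is decreasing, and b(t) ≤ b₀ exp(−(2a₀/(a₀+b₀)) cos(2θ₀) t) for all t ≥ 0; consequently b(t) → 0 and a(t) → a₀ + b₀ as t → +∞. Moreover the limiting angle θ_∞ = lim_{t→∞} θ(t) satisfies sin(2θ_∞) = ((a₀−b₀)/(a₀+b₀)) sin(2θ₀) > 0. -/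
/-!
The sector `0 < b < a`, `0 < θ < π/4` is invariant: inside it `a` grows, `b` and `θ` decrease,
and `a + b`, `(a - b) sin 2θ` are conserved. At a first exit time `b ≤ b₀ < a₀` keeps `b < a`,
`θ ≤ θ₀` keeps `θ < π/4`, the conserved quantity keeps `sin 2θ > 0`, and the Grönwall bound
`b' ≥ -k (a₀ + b₀) b` keeps `b > 0`, so the solution never exits. Inside the sector
`b' ≤ -k a₀ cos(2θ₀) b` gives the exponential decay, and since
`θ = arcsin ((a₀ - b₀) sin 2θ₀ / (a - b)) / 2` with `a - b → a₀ + b₀` the angle converges.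
-/

open Set Filter Topology Real

theorem forall_mem_Ici_of_eventually_of_forall_Ico {α : Type*} [ConditionallyCompleteLinearOrder α]
    [TopologicalSpace α] [OrderTopology α] {P : α → Prop} {x₀ : α}
    (hopen : ∀ t ∈ Ici x₀, P t → ∀ᶠ u in 𝓝 t, P u)
    (hstep : ∀ T ∈ Ici x₀, (∀ u ∈ Ico x₀ T, P u) → P T) :
    ∀ t ∈ Ici x₀, P t := by
  by_contra! hbad
  set S := {t | x₀ ≤ t ∧ ¬ P t}
  have hS : IsClosed S := by
    refine isOpen_compl_iff.1 (isOpen_iff_mem_nhds.2 fun t ht => ?_)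
    simp only [S, mem_compl_iff, mem_ofPred_eq, not_and, not_not] at ht
    rcases lt_or_ge t x₀ with htx | htx
    · filter_upwards [Iio_mem_nhds htx] with u hu using fun hu' => hu'.1.not_gt hu
    · filter_upwards [hopen t htx (ht htx)] with u hu using fun hu' => hu'.2 hu
  have hbdd : BddBelow S := ⟨x₀, fun t ht => ht.1⟩
  obtain ⟨hT, hPT⟩ := hS.csInf_mem hbad hbdd
  exact hPT <| hstep _ hT fun u hu => by_contra fun hPu => hu.2.not_ge (csInf_le hbdd ⟨hu.1, hPu⟩)

section Comparison

variable {f f' : ℝ → ℝ} {s : Set ℝ}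

theorem monotoneOn_of_forall_hasDerivAt_nonneg (hs : Convex ℝ s)
    (hf : ∀ t ∈ s, HasDerivAt f (f' t) t) (hf' : ∀ t ∈ interior s, 0 ≤ f' t) :
    MonotoneOn f s :=
  monotoneOn_of_hasDerivWithinAt_nonneg hs (fun t ht => (hf t ht).continuousAt.continuousWithinAt)
    (fun t ht => (hf t (interior_subset ht)).hasDerivWithinAt) hf'

theorem antitoneOn_of_forall_hasDerivAt_nonpos (hs : Convex ℝ s)
    (hf : ∀ t ∈ s, HasDerivAt f (f' t) t) (hf' : ∀ t ∈ interior s, f' t ≤ 0) :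
    AntitoneOn f s :=
  antitoneOn_of_hasDerivWithinAt_nonpos hs (fun t ht => (hf t ht).continuousAt.continuousWithinAt)
    (fun t ht => (hf t (interior_subset ht)).hasDerivWithinAt) hf'

theorem hasDerivAt_mul_exp (K t : ℝ) (hf : HasDerivAt f (f' t) t) :
    HasDerivAt (fun t => f t * exp (K * t)) ((f' t + K * f t) * exp (K * t)) t := by
  have hexp : HasDerivAt (fun t => exp (K * t)) (exp (K * t) * K) t := by
    simpa using ((hasDerivAt_id t).const_mul K).exp
  exact (hf.mul hexp).congr_deriv (by ring)

theorem monotoneOn_mul_exp_of_le_hasDerivAt {K : ℝ} (hs : Convex ℝ s)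
    (hf : ∀ t ∈ s, HasDerivAt f (f' t) t) (hf' : ∀ t ∈ interior s, -K * f t ≤ f' t) :
    MonotoneOn (fun t => f t * exp (K * t)) s :=
  monotoneOn_of_forall_hasDerivAt_nonneg hs (fun t ht => hasDerivAt_mul_exp K t (hf t ht))
    fun t ht => mul_nonneg (by linarith [hf' t ht]) (exp_pos _).le

theorem antitoneOn_mul_exp_of_hasDerivAt_le {K : ℝ} (hs : Convex ℝ s)
    (hf : ∀ t ∈ s, HasDerivAt f (f' t) t) (hf' : ∀ t ∈ interior s, f' t ≤ -K * f t) :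
    AntitoneOn (fun t => f t * exp (K * t)) s :=
  antitoneOn_of_forall_hasDerivAt_nonpos hs (fun t ht => hasDerivAt_mul_exp K t (hf t ht))
    fun t ht => mul_nonpos_of_nonpos_of_nonneg (by linarith [hf' t ht]) (exp_pos _).le

end Comparison

namespace TiltedEllipse

/-- The paper's rate is `k = 2 / (a₀ + b₀)`. -/
structure IsFlow (k : ℝ) (a b θ : ℝ → ℝ) : Prop where
  hasDerivAt_a : ∀ t ∈ Ici (0 : ℝ), HasDerivAt a (k * a t * b t * cos (2 * θ t)) t
  hasDerivAt_b : ∀ t ∈ Ici (0 : ℝ), HasDerivAt b (-(k * a t * b t * cos (2 * θ t))) t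
  hasDerivAt_θ : ∀ t ∈ Ici (0 : ℝ),
    HasDerivAt θ (-(k * (a t * b t / (a t - b t)) * sin (2 * θ t))) t

structure Admissible (a b θ : ℝ → ℝ) (t : ℝ) : Prop where
  b_pos : 0 < b t
  b_lt_a : b t < a t
  θ_pos : 0 < θ t
  θ_lt : θ t < π / 4

namespace Admissible

variable {a b θ : ℝ → ℝ} {t : ℝ}

theorem a_pos (h : Admissible a b θ t) : 0 < a t := h.b_pos.trans h.b_lt_a

theorem cos_pos (h : Admissible a b θ t) : 0 < cos (2 * θ t) :=
  Real.cos_pos_of_mem_Ioo ⟨by linarith [h.θ_pos, pi_pos], by linarith [h.θ_lt]⟩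

theorem sin_pos (h : Admissible a b θ t) : 0 < sin (2 * θ t) :=
  Real.sin_pos_of_pos_of_lt_pi (by linarith [h.θ_pos]) (by linarith [h.θ_lt, pi_pos])

end Admissible

namespace IsFlow

variable {k : ℝ} {a b θ : ℝ → ℝ} {s : Set ℝ}

theorem add_eq (h : IsFlow k a b θ) : ∀ t ∈ Ici (0 : ℝ), a t + b t = a 0 + b 0 := by
  have hderiv (t) (ht : t ∈ Ici (0 : ℝ)) : HasDerivAt (fun t => a t + b t) 0 t :=
    ((h.hasDerivAt_a t ht).add (h.hasDerivAt_b t ht)).congr_deriv (by ring)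
  intro T hT
  exact constant_of_has_deriv_right_zero
    (fun t ht => (hderiv t ht.1).continuousAt.continuousWithinAt)
    (fun t ht => (hderiv t ht.1).hasDerivWithinAt) T ⟨hT, le_rfl⟩

theorem hasDerivAt_sub_mul_sin (h : IsFlow k a b θ) {t : ℝ} (ht : t ∈ Ici (0 : ℝ))
    (hab : a t ≠ b t) : HasDerivAt (fun t => (a t - b t) * sin (2 * θ t)) 0 t := by
  have hab' : a t - b t ≠ 0 := sub_ne_zero.2 hab
  exact (((h.hasDerivAt_a t ht).sub (h.hasDerivAt_b t ht)).mul
    (((h.hasDerivAt_θ t ht).const_mul 2).sin)).congr_deriv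
      (by rw [Pi.sub_apply]; field_simp; ring)

theorem sub_mul_sin_eq (h : IsFlow k a b θ) {T : ℝ} (hT : 0 ≤ T)
    (hab : ∀ t ∈ Ico 0 T, b t < a t) :
    (a T - b T) * sin (2 * θ T) = (a 0 - b 0) * sin (2 * θ 0) := by
  have hcont : ContinuousOn (fun t => (a t - b t) * sin (2 * θ t)) (Icc 0 T) := fun t ht =>
    (((h.hasDerivAt_a t ht.1).continuousAt.sub (h.hasDerivAt_b t ht.1).continuousAt).mul
      (continuous_sin.continuousAt.comp
        (continuousAt_const.mul (h.hasDerivAt_θ t ht.1).continuousAt))).continuousWithinAt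
  exact constant_of_has_deriv_right_zero hcont
    (fun t ht => (h.hasDerivAt_sub_mul_sin ht.1 (hab t ht).ne').hasDerivWithinAt) T ⟨hT, le_rfl⟩

theorem monotoneOn_a (h : IsFlow k a b θ) (hk : 0 ≤ k) (hs : Convex ℝ s) (hs₀ : s ⊆ Ici 0)
    (hadm : ∀ t ∈ interior s, Admissible a b θ t) : MonotoneOn a s :=
  monotoneOn_of_forall_hasDerivAt_nonneg hs (fun t ht => h.hasDerivAt_a t (hs₀ ht)) fun t ht =>
    have ht := hadm t ht
    mul_nonneg (mul_nonneg (mul_nonneg hk ht.a_pos.le) ht.b_pos.le) ht.cos_pos.le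

theorem antitoneOn_b (h : IsFlow k a b θ) (hk : 0 ≤ k) (hs : Convex ℝ s) (hs₀ : s ⊆ Ici 0)
    (hadm : ∀ t ∈ interior s, Admissible a b θ t) : AntitoneOn b s :=
  antitoneOn_of_forall_hasDerivAt_nonpos hs (fun t ht => h.hasDerivAt_b t (hs₀ ht)) fun t ht =>
    have ht := hadm t ht
    neg_nonpos.2 <| mul_nonneg (mul_nonneg (mul_nonneg hk ht.a_pos.le) ht.b_pos.le) ht.cos_pos.le

theorem antitoneOn_θ (h : IsFlow k a b θ) (hk : 0 ≤ k) (hs : Convex ℝ s) (hs₀ : s ⊆ Ici 0)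
    (hadm : ∀ t ∈ interior s, Admissible a b θ t) : AntitoneOn θ s :=
  antitoneOn_of_forall_hasDerivAt_nonpos hs (fun t ht => h.hasDerivAt_θ t (hs₀ ht)) fun t ht =>
    have ht := hadm t ht
    neg_nonpos.2 <| mul_nonneg (mul_nonneg hk (div_pos (mul_pos ht.a_pos ht.b_pos)
      (sub_pos.2 ht.b_lt_a)).le) ht.sin_pos.le

/-- Since `a cos 2θ ≤ a + b`, we have `b' ≥ -k (a₀ + b₀) b`. -/
theorem monotoneOn_b_mul_exp (h : IsFlow k a b θ) (hk : 0 ≤ k) (hs : Convex ℝ s)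
    (hs₀ : s ⊆ Ici 0) (hadm : ∀ t ∈ interior s, Admissible a b θ t) :
    MonotoneOn (fun t => b t * exp (k * (a 0 + b 0) * t)) s := by
  refine monotoneOn_mul_exp_of_le_hasDerivAt hs (fun t ht => h.hasDerivAt_b t (hs₀ ht))
    fun t ht => ?_
  have hsum := h.add_eq t (hs₀ (interior_subset ht))
  have ht := hadm t ht
  have hcos : a t * cos (2 * θ t) ≤ a t + b t := by
    nlinarith [cos_le_one (2 * θ t), ht.a_pos, ht.b_pos]
  have := mul_le_mul_of_nonneg_left hcos (mul_nonneg hk ht.b_pos.le)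
  rw [hsum] at this
  linarith

theorem eventually_admissible (h : IsFlow k a b θ) {t : ℝ} (ht : t ∈ Ici (0 : ℝ))
    (hadm : Admissible a b θ t) : ∀ᶠ u in 𝓝 t, Admissible a b θ u := by
  have ha := (h.hasDerivAt_a t ht).continuousAt
  have hb := (h.hasDerivAt_b t ht).continuousAt
  have hθ := (h.hasDerivAt_θ t ht).continuousAt
  filter_upwards [continuousAt_const.eventually_lt hb hadm.b_pos, hb.eventually_lt ha hadm.b_lt_a,
    continuousAt_const.eventually_lt hθ hadm.θ_pos,
    hθ.eventually_lt continuousAt_const hadm.θ_lt] with u h₁ h₂ h₃ h₄ using ⟨h₁, h₂, h₃, h₄⟩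

theorem admissible_of_forall_Ico (h : IsFlow k a b θ) (hk : 0 ≤ k) (h₀ : Admissible a b θ 0)
    {T : ℝ} (hT : 0 ≤ T) (hadm : ∀ t ∈ Ico 0 T, Admissible a b θ t) : Admissible a b θ T := by
  rcases hT.eq_or_lt with rfl | hT
  · exact h₀
  have hs₀ : Icc 0 T ⊆ Ici 0 := Icc_subset_Ici_self
  have hadm' : ∀ t ∈ interior (Icc 0 T), Admissible a b θ t := by
    rw [interior_Icc]
    exact fun t ht => hadm t (Ioo_subset_Ico_self ht)
  have h0T : (0 : ℝ) ∈ Icc 0 T := left_mem_Icc.2 hT.le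
  have hTT : T ∈ Icc 0 T := right_mem_Icc.2 hT.le
  have hb_pos : 0 < b T := by
    have := h.monotoneOn_b_mul_exp hk (convex_Icc 0 T) hs₀ hadm' h0T hTT hT.le
    simp only [mul_zero, exp_zero, mul_one] at this
    exact pos_of_mul_pos_left (h₀.b_pos.trans_le this) (exp_pos _).le
  have hb_le : b T ≤ b 0 := h.antitoneOn_b hk (convex_Icc 0 T) hs₀ hadm' h0T hTT hT.le
  have hb_lt_a : b T < a T := by linarith [h.add_eq T hT.le, h₀.b_lt_a]
  have hθ_le : θ T ≤ θ 0 := h.antitoneOn_θ hk (convex_Icc 0 T) hs₀ hadm' h0T hTT hT.le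
  have hθ_nonneg : 0 ≤ θ T :=
    ge_of_tendsto (h.hasDerivAt_θ T hT.le).continuousAt.continuousWithinAt <| by
      filter_upwards [Ioo_mem_nhdsLT hT] with t ht using (hadm t (Ioo_subset_Ico_self ht)).θ_pos.le
  have hsin : 0 < sin (2 * θ T) := by
    have hconst := h.sub_mul_sin_eq hT.le fun t ht => (hadm t ht).b_lt_a
    have hpos := mul_pos (sub_pos.2 h₀.b_lt_a) h₀.sin_pos
    exact pos_of_mul_pos_right (hconst ▸ hpos) (sub_pos.2 hb_lt_a).le
  have hθ_ne : θ T ≠ 0 := fun h0 => by simp [h0] at hsin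
  exact ⟨hb_pos, hb_lt_a, lt_of_le_of_ne hθ_nonneg hθ_ne.symm, hθ_le.trans_lt h₀.θ_lt⟩

theorem admissible (h : IsFlow k a b θ) (hk : 0 ≤ k) (h₀ : Admissible a b θ 0) :
    ∀ t ∈ Ici (0 : ℝ), Admissible a b θ t :=
  forall_mem_Ici_of_eventually_of_forall_Ico (fun _ ht => h.eventually_admissible ht)
    fun _ hT => h.admissible_of_forall_Ico hk h₀ hT

/-- Along the flow `a ≥ a₀` and `cos 2θ ≥ cos 2θ₀`, so `b' ≤ -k a₀ cos(2θ₀) b`. -/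
theorem b_le_exp (h : IsFlow k a b θ) (hk : 0 ≤ k) (hadm : ∀ t ∈ Ici (0 : ℝ), Admissible a b θ t) :
    ∀ t ∈ Ici (0 : ℝ), b t ≤ b 0 * exp (-(k * a 0) * cos (2 * θ 0) * t) := by
  have hadm' : ∀ t ∈ interior (Ici (0 : ℝ)), Admissible a b θ t :=
    fun t ht => hadm t (interior_subset ht)
  have ha := h.monotoneOn_a hk (convex_Ici 0) subset_rfl hadm'
  have hθ := h.antitoneOn_θ hk (convex_Ici 0) subset_rfl hadm'
  set K := k * a 0 * cos (2 * θ 0)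
  have hdecay : AntitoneOn (fun t => b t * exp (K * t)) (Ici 0) := by
    refine antitoneOn_mul_exp_of_hasDerivAt_le (convex_Ici 0) h.hasDerivAt_b fun t ht => ?_
    have ht₀ : t ∈ Ici (0 : ℝ) := interior_subset ht
    have hcos : cos (2 * θ 0) ≤ cos (2 * θ t) :=
      cos_le_cos_of_nonneg_of_le_pi (by linarith [(hadm t ht₀).θ_pos])
        (by linarith [(hadm 0 self_mem_Ici).θ_lt, pi_pos]) (by linarith [hθ self_mem_Ici ht₀ ht₀])
    have hacos : a 0 * cos (2 * θ 0) ≤ a t * cos (2 * θ t) :=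
      mul_le_mul (ha self_mem_Ici ht₀ ht₀) hcos (hadm 0 self_mem_Ici).cos_pos.le
        (hadm t ht₀).a_pos.le
    have := mul_le_mul_of_nonneg_left hacos (mul_nonneg hk (hadm t ht₀).b_pos.le)
    linarith
  intro t ht
  have hbt := hdecay self_mem_Ici ht ht
  simp only [mul_zero, exp_zero, mul_one] at hbt
  rw [show -(k * a 0) * cos (2 * θ 0) * t = -(K * t) by ring, exp_neg, ← div_eq_mul_inv,
    le_div_iff₀ (exp_pos _)]
  exact hbt

theorem tendsto_b (h : IsFlow k a b θ) (hk : 0 < k)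
    (hadm : ∀ t ∈ Ici (0 : ℝ), Admissible a b θ t) : Tendsto b atTop (𝓝 0) := by
  have h₀ := hadm 0 self_mem_Ici
  have hK : 0 < k * a 0 * cos (2 * θ 0) := mul_pos (mul_pos hk h₀.a_pos) h₀.cos_pos
  have hexp : Tendsto (fun t => b 0 * exp (-(k * a 0) * cos (2 * θ 0) * t)) atTop (𝓝 0) := by
    simpa [neg_mul, mul_assoc] using
      ((tendsto_exp_neg_atTop_nhds_zero.comp (tendsto_id.const_mul_atTop hK)).const_mul (b 0))
  exact tendsto_of_tendsto_of_tendsto_of_le_of_le' tendsto_const_nhds hexp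
    (eventually_ge_atTop 0 |>.mono fun t ht => (hadm t ht).b_pos.le)
    (eventually_ge_atTop 0 |>.mono fun t ht => h.b_le_exp hk.le hadm t ht)

theorem tendsto_a (h : IsFlow k a b θ) (hk : 0 < k)
    (hadm : ∀ t ∈ Ici (0 : ℝ), Admissible a b θ t) : Tendsto a atTop (𝓝 (a 0 + b 0)) := by
  have hlim := (tendsto_const_nhds (x := a 0 + b 0)).sub (h.tendsto_b hk hadm)
  rw [sub_zero] at hlim
  exact hlim.congr' (eventually_ge_atTop 0 |>.mono fun t ht => by linarith [h.add_eq t ht])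

/-- The conserved quantity pins down `θ = arcsin ((a₀ - b₀) sin 2θ₀ / (a - b)) / 2`. -/
theorem exists_tendsto_θ (h : IsFlow k a b θ) (hk : 0 < k)
    (hadm : ∀ t ∈ Ici (0 : ℝ), Admissible a b θ t) :
    ∃ θ_lim, Tendsto θ atTop (𝓝 θ_lim) ∧
      sin (2 * θ_lim) = (a 0 - b 0) / (a 0 + b 0) * sin (2 * θ 0) := by
  have h₀ := hadm 0 self_mem_Ici
  set c := (a 0 - b 0) * sin (2 * θ 0)
  have hθ_eq : ∀ t ∈ Ici (0 : ℝ), θ t = arcsin (c / (a t - b t)) / 2 := by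
    intro t ht
    have ht' := hadm t ht
    have hc_eq : c = (a t - b t) * sin (2 * θ t) :=
      (h.sub_mul_sin_eq ht fun u hu => (hadm u hu.1).b_lt_a).symm
    rw [hc_eq, mul_div_cancel_left₀ _ (sub_pos.2 ht'.b_lt_a).ne',
      arcsin_sin (by linarith [ht'.θ_pos, pi_pos]) (by linarith [ht'.θ_lt])]
    ring
  have hs : 0 < a 0 + b 0 := add_pos h₀.a_pos h₀.b_pos
  have hsub : Tendsto (fun t => a t - b t) atTop (𝓝 (a 0 + b 0)) := by
    simpa using (h.tendsto_a hk hadm).sub (h.tendsto_b hk hadm)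
  refine ⟨arcsin (c / (a 0 + b 0)) / 2, ?_, ?_⟩
  · exact (((continuous_arcsin.tendsto _).comp (tendsto_const_nhds.div hsub hs.ne')).div_const 2
      |>.congr' (eventually_ge_atTop 0 |>.mono fun t ht => (hθ_eq t ht).symm))
  have hc : 0 < c := mul_pos (sub_pos.2 h₀.b_lt_a) h₀.sin_pos
  have hc_le : c ≤ a 0 + b 0 := by
    nlinarith [sin_le_one (2 * θ 0), h₀.sin_pos, h₀.b_lt_a, h₀.b_pos]
  rw [mul_div_cancel₀ _ two_ne_zero, sin_arcsin (by linarith [div_pos hc hs])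
    ((div_le_one hs).2 hc_le), div_mul_eq_mul_div]

end IsFlow

end TiltedEllipse

/-- Exponential collapse of the minor axis for the tilted-ellipse system with
`a₀ > b₀ > 0` and `0 < θ₀ < π/4`: `θ` decreases, `a` increases, `b` decreases with
`b(t) ≤ b₀ exp(−(2a₀/(a₀+b₀)) cos(2θ₀) t)`, hence `b → 0`, `a → a₀ + b₀`, and the
limiting angle `θ_∞` satisfies `sin(2θ_∞) = ((a₀−b₀)/(a₀+b₀)) sin(2θ₀) > 0`. -/
theorem stmt_18 (a b θ : ℝ → ℝ) (a₀ b₀ θ₀ : ℝ)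
    (hb₀ : 0 < b₀) (hab : b₀ < a₀)
    (hθ₀ : 0 < θ₀) (hθ₀' : θ₀ < Real.pi / 4)
    (hia : a 0 = a₀) (hib : b 0 = b₀) (hiθ : θ 0 = θ₀)
    (hda : ∀ t ∈ Ici (0 : ℝ),
      HasDerivAt a (2 / (a₀ + b₀) * a t * b t * Real.cos (2 * θ t)) t)
    (hdb : ∀ t ∈ Ici (0 : ℝ),
      HasDerivAt b (-(2 / (a₀ + b₀) * a t * b t * Real.cos (2 * θ t))) t)
    (hdθ : ∀ t ∈ Ici (0 : ℝ), HasDerivAt θ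
      (-(2 / (a₀ + b₀) * (a t * b t / (a t - b t)) * Real.sin (2 * θ t))) t) :
    AntitoneOn θ (Ici (0 : ℝ)) ∧ MonotoneOn a (Ici (0 : ℝ)) ∧ AntitoneOn b (Ici (0 : ℝ)) ∧
    (∀ t ∈ Ici (0 : ℝ),
      b t ≤ b₀ * Real.exp (-(2 * a₀ / (a₀ + b₀)) * Real.cos (2 * θ₀) * t)) ∧
    Tendsto b atTop (𝓝 0) ∧ Tendsto a atTop (𝓝 (a₀ + b₀)) ∧
    ∃ θinf : ℝ, Tendsto θ atTop (𝓝 θinf) ∧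
      Real.sin (2 * θinf) = (a₀ - b₀) / (a₀ + b₀) * Real.sin (2 * θ₀) ∧
      0 < Real.sin (2 * θinf) := by
  subst hia hib hiθ
  have h : TiltedEllipse.IsFlow (2 / (a 0 + b 0)) a b θ := ⟨hda, hdb, hdθ⟩
  have hk : 0 < 2 / (a 0 + b 0) := div_pos two_pos (by linarith)
  have h₀ : TiltedEllipse.Admissible a b θ 0 := ⟨hb₀, hab, hθ₀, hθ₀'⟩
  have hadm := h.admissible hk.le h₀
  have hadm' : ∀ t ∈ interior (Ici (0 : ℝ)), TiltedEllipse.Admissible a b θ t :=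
    fun t ht => hadm t (interior_subset ht)
  obtain ⟨θ_lim, hθ_lim, hsin⟩ := h.exists_tendsto_θ hk hadm
  refine ⟨h.antitoneOn_θ hk.le (convex_Ici 0) subset_rfl hadm',
    h.monotoneOn_a hk.le (convex_Ici 0) subset_rfl hadm',
    h.antitoneOn_b hk.le (convex_Ici 0) subset_rfl hadm',
    fun t ht => by simpa only [div_mul_eq_mul_div] using h.b_le_exp hk.le hadm t ht,
    h.tendsto_b hk hadm, h.tendsto_a hk hadm, θ_lim, hθ_lim, hsin, ?_⟩
  rw [hsin]
  exact mul_pos (div_pos (by linarith) (by linarith)) h₀.sin_pos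
end
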